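/- arXiv:math/0105226 — 2 statements merged into one kernel-verified Lean document; each statement's English description precedes it below -/
import Mathlib

section
/- For any weakly increasing word C and any word w, if (C', w') is the output of the carrier algorithm applied to (C, w), then the concatenation C ++ w is Knuth equivalent to w' ++ C'. -/
/-- Elementary Knuth transformations on consecutive triples of letters:
`y z x → y x z` when `x < y ≤ z`, and `x z y → z x y` when `x ≤ y < z`. -/
inductive KnuthStep : List ℕ → List ℕ → Prop
  | k1 (u v : List ℕ) (x y z : ℕ) (h1 : x < y) (h2 : y ≤ z) :
      KnuthStep (u ++ y :: z :: x :: v) (u ++ y :: x :: z :: v)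
  | k2 (u v : List ℕ) (x y z : ℕ) (h1 : x ≤ y) (h2 : y < z) :
      KnuthStep (u ++ x :: z :: y :: v) (u ++ z :: x :: y :: v)

/-- Knuth equivalence: the equivalence relation generated by the elementary
Knuth transformations. -/
def KnuthEquiv : List ℕ → List ℕ → Prop := Relation.EqvGen KnuthStep

/-- The letter unloaded when the (sorted) carrier `C` loads `x`: the smallest
letter of `C` strictly greater than `x` if one exists, otherwise the smallest
letter of `C`. -/
def carrierOut (C : List ℕ) (x : ℕ) : ℕ :=
  match C.filter (fun c => x < c) with
  | [] => C.headI
  | y :: _ => y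

/-- The carrier after one loading/unloading step: the output letter is
replaced by `x`, keeping the carrier sorted. -/
def carrierNext (C : List ℕ) (x : ℕ) : List ℕ :=
  List.orderedInsert (· ≤ ·) x (C.erase (carrierOut C x))

/-- The carrier algorithm: process the letters of the input word from left to
right, returning the final carrier together with the output word. -/
def carrierRun : List ℕ → List ℕ → List ℕ × List ℕ
  | C, [] => (C, [])
  | C, x :: w =>
      let r := carrierRun (carrierNext C x) w
      (r.1, carrierOut C x :: r.2)

open Relation List

lemma KnuthEquiv.rfl (l : List ℕ) : KnuthEquiv l l := EqvGen.refl l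

lemma KnuthEquiv.trans' {a b c : List ℕ} (h1 : KnuthEquiv a b) (h2 : KnuthEquiv b c) :
    KnuthEquiv a c := EqvGen.trans _ _ _ h1 h2

lemma KnuthStep.append_right {a b : List ℕ} (t : List ℕ) (h : KnuthStep a b) :
    KnuthStep (a ++ t) (b ++ t) := by
  cases h with
  | k1 u v x y z h1 h2 => simpa [List.append_assoc] using KnuthStep.k1 u (v ++ t) x y z h1 h2
  | k2 u v x y z h1 h2 => simpa [List.append_assoc] using KnuthStep.k2 u (v ++ t) x y z h1 h2

lemma KnuthStep.append_left {a b : List ℕ} (t : List ℕ) (h : KnuthStep a b) :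
    KnuthStep (t ++ a) (t ++ b) := by
  cases h with
  | k1 u v x y z h1 h2 => simpa [List.append_assoc] using KnuthStep.k1 (t ++ u) v x y z h1 h2
  | k2 u v x y z h1 h2 => simpa [List.append_assoc] using KnuthStep.k2 (t ++ u) v x y z h1 h2

lemma KnuthEquiv.append_right {a b : List ℕ} (t : List ℕ) (h : KnuthEquiv a b) :
    KnuthEquiv (a ++ t) (b ++ t) := by
  induction h with
  | rel p q h => exact EqvGen.rel _ _ (h.append_right t)
  | refl p => exact EqvGen.refl _
  | symm p q h ih => exact EqvGen.symm _ _ ih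
  | trans p q r h1 h2 ih1 ih2 => exact EqvGen.trans _ _ _ ih1 ih2

lemma KnuthEquiv.append_left {a b : List ℕ} (t : List ℕ) (h : KnuthEquiv a b) :
    KnuthEquiv (t ++ a) (t ++ b) := by
  induction h with
  | rel p q h => exact EqvGen.rel _ _ (h.append_left t)
  | refl p => exact EqvGen.refl _
  | symm p q h ih => exact EqvGen.symm _ _ ih
  | trans p q r h1 h2 ih1 ih2 => exact EqvGen.trans _ _ _ ih1 ih2

lemma KnuthEquiv.cons (c : ℕ) {a b : List ℕ} (h : KnuthEquiv a b) :
    KnuthEquiv (c :: a) (c :: b) := h.append_left [c]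

/-- moving x (smaller than everything) leftwards past a row, behind its head -/
lemma front_lemma (x : ℕ) : ∀ (c : ℕ) (C2 : List ℕ), (c :: C2).Pairwise (· ≤ ·) → x < c →
    KnuthEquiv (c :: C2 ++ [x]) (c :: x :: C2) := by
  intro c C2
  induction C2 generalizing c with
  | nil => intro _ _; exact KnuthEquiv.rfl _
  | cons b C2 ih =>
    intro hs hx
    have hcb : c ≤ b := List.rel_of_pairwise_cons hs List.mem_cons_self
    have h1 : KnuthEquiv (b :: C2 ++ [x]) (b :: x :: C2) :=
      ih b hs.of_cons (lt_of_lt_of_le hx hcb)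
    have h2 : KnuthEquiv (c :: b :: C2 ++ [x]) (c :: b :: x :: C2) := h1.cons c
    have h3 : KnuthStep (c :: b :: x :: C2) (c :: x :: b :: C2) := by
      simpa using KnuthStep.k1 [] C2 x c b hx hcb
    exact h2.trans' (EqvGen.rel _ _ h3)

lemma orderedInsert_all_le {x : ℕ} {l : List ℕ} (h : ∀ a ∈ l, a ≤ x) (hl : l.Pairwise (· ≤ ·)) :
    List.orderedInsert (· ≤ ·) x l = l ++ [x] := by
  refine (fun hp h1 h2 => List.Perm.eq_of_pairwise' (r := (· ≤ ·)) h1 h2 hp) ?_ ?_ ?_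
  · exact (List.perm_orderedInsert _ _ _).trans (List.perm_append_singleton _ _).symm
  · exact hl.orderedInsert _ _
  · refine List.pairwise_append.2 ⟨hl, List.pairwise_singleton _ _, ?_⟩
    intro a ha b hb; simp at hb; subst hb; exact h a ha

lemma orderedInsert_all_ge {x : ℕ} {l : List ℕ} (h : ∀ a ∈ l, x ≤ a) :
    List.orderedInsert (· ≤ ·) x l = x :: l := by
  cases l with
  | nil => rfl
  | cons b l => exact List.orderedInsert_cons_of_le _ _ (h b (List.mem_cons_self))

lemma orderedInsert_ne_nil (x : ℕ) (l : List ℕ) : List.orderedInsert (· ≤ ·) x l ≠ [] := by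
  have := List.orderedInsert_length (· ≤ ·) l x
  intro h; rw [h] at this; simp at this

lemma headI_orderedInsert_le (x : ℕ) (l : List ℕ) :
    (List.orderedInsert (· ≤ ·) x l).headI ≤ x := by
  cases l with
  | nil => simp
  | cons b l =>
    by_cases h : x ≤ b
    · rw [List.orderedInsert_cons_of_le _ _ h]
      simp
    · simp only [List.orderedInsert_cons, h, ↓reduceIte]
      simp only [List.headI]
      omega

lemma single_step (x : ℕ) : ∀ (C : List ℕ), C.Pairwise (· ≤ ·) → C ≠ [] →
    KnuthEquiv (C ++ [x]) (carrierOut C x :: carrierNext C x) := by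
  intro C
  induction C with
  | nil => intro _ h; exact absurd rfl h
  | cons c C2 ih =>
    intro hC hne
    have hC2 : C2.Pairwise (· ≤ ·) := hC.of_cons
    by_cases hxc : x < c
    · -- everything in C is > x; output c, carrier becomes x :: C2
      have hall : ∀ b ∈ C2, c ≤ b := fun b hb => List.rel_of_pairwise_cons hC hb
      have hout : carrierOut (c :: C2) x = c := by
        simp [carrierOut, List.filter_cons, hxc]
      have hnext : carrierNext (c :: C2) x = x :: C2 := by
        rw [carrierNext, hout, List.erase_cons_head]
        exact orderedInsert_all_ge (fun a ha => le_of_lt (lt_of_lt_of_le hxc (hall a ha)))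
      rw [hout, hnext]
      exact front_lemma x c C2 hC hxc
    · push_neg at hxc  -- c ≤ x
      have hfc : (c :: C2).filter (fun cc => x < cc) = C2.filter (fun cc => x < cc) := by
        simp [List.filter_cons, hxc, not_lt.2 hxc]
      cases hfe : C2.filter (fun cc => x < cc) with
      | nil =>
        -- everything ≤ x
        have hall : ∀ a ∈ C2, a ≤ x := by
          intro a ha
          by_contra hcon
          have : a ∈ C2.filter (fun cc => x < cc) := by
            rw [List.mem_filter]; exact ⟨ha, by simp; omega⟩
          rw [hfe] at this; simp at this
        have hout : carrierOut (c :: C2) x = c := by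
          rw [carrierOut, hfc, hfe]
          rfl
        have hnext : carrierNext (c :: C2) x = C2 ++ [x] := by
          rw [carrierNext, hout, List.erase_cons_head]
          exact orderedInsert_all_le hall hC2
        rw [hout, hnext]
        exact KnuthEquiv.rfl _
      | cons y rest =>
        have hyC2 : y ∈ C2 ∧ x < y := by
          have : y ∈ C2.filter (fun cc => x < cc) := by rw [hfe]; exact List.mem_cons_self
          rw [List.mem_filter] at this
          exact ⟨this.1, by simpa using this.2⟩
        have hC2ne : C2 ≠ [] := List.ne_nil_of_mem hyC2.1
        have houtC2 : carrierOut C2 x = y := by rw [carrierOut, hfe]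
        have hout : carrierOut (c :: C2) x = y := by rw [carrierOut, hfc, hfe]
        have hyc : c ≠ y := by have := hyC2.2; omega
        have hallc : ∀ b ∈ C2, c ≤ b := fun b hb => List.rel_of_pairwise_cons hC hb
        have hnextC2_sorted : (carrierNext C2 x).Pairwise (· ≤ ·) :=
          Pairwise.orderedInsert _ _ ((hC2.sublist (List.erase_sublist)))
        have hnext : carrierNext (c :: C2) x = c :: carrierNext C2 x := by
          refine (fun hp h1 h2 => List.Perm.eq_of_pairwise' (r := (· ≤ ·)) h1 h2 hp) ?_ ?_ ?_
          · rw [carrierNext, hout]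
            refine (List.perm_orderedInsert _ _ _).trans ?_
            rw [List.erase_cons_tail (by simpa using hyc)]
            refine (List.Perm.swap _ _ _).trans ?_
            exact ((List.perm_orderedInsert (· ≤ ·) x (C2.erase y)).symm.cons c).trans
              (by rw [carrierNext, houtC2])
          · exact Pairwise.orderedInsert _ _ ((hC.sublist (List.erase_sublist)))
          · rw [List.pairwise_cons]
            refine ⟨fun b hb => ?_, hnextC2_sorted⟩
            have : b = x ∨ b ∈ C2.erase y := by
              have := (List.perm_orderedInsert (· ≤ ·) x (C2.erase y)).mem_iff.mp
                (by rw [carrierNext, houtC2] at hb; exact hb)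
              simpa using this
            rcases this with rfl | hb'
            · exact hxc
            · exact hallc b (List.mem_of_mem_erase hb')
        -- IH
        have hIH : KnuthEquiv (C2 ++ [x]) (y :: carrierNext C2 x) := by
          rw [← houtC2]; exact ih hC2 hC2ne
        have h2 : KnuthEquiv (c :: C2 ++ [x]) (c :: y :: carrierNext C2 x) := hIH.cons c
        -- carrierNext C2 x = h :: rest', with c ≤ h and h < y
        obtain ⟨h, rest', hhr⟩ : ∃ h rest', carrierNext C2 x = h :: rest' := by
          cases hcn : carrierNext C2 x with
          | nil => exact absurd hcn (orderedInsert_ne_nil _ _)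
          | cons h rest' => exact ⟨h, rest', rfl⟩
        have hhx : h ≤ x := by
          have := headI_orderedInsert_le x (C2.erase y)
          rw [show List.orderedInsert (· ≤ ·) x (C2.erase y) = carrierNext C2 x by
            rw [carrierNext, houtC2], hhr] at this
          simpa using this
        have hch : c ≤ h := by
          have hmem : h ∈ carrierNext C2 x := by rw [hhr]; exact List.mem_cons_self
          have : h = x ∨ h ∈ C2.erase y := by
            have := (List.perm_orderedInsert (· ≤ ·) x (C2.erase y)).mem_iff.mp
              (by rw [carrierNext, houtC2] at hmem; exact hmem)
            simpa using this
          rcases this with rfl | hb'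
          · exact hxc
          · exact hallc h (List.mem_of_mem_erase hb')
        have h3 : KnuthStep (c :: y :: h :: rest') (y :: c :: h :: rest') := by
          simpa using KnuthStep.k2 [] rest' c h y hch (lt_of_le_of_lt hhx hyC2.2)
        rw [hout, hnext, hhr]
        exact h2.trans' (by rw [hhr]; exact EqvGen.rel _ _ h3)

/-- For any (nonempty) weakly increasing carrier `C` and any word `w`, if
`(C', w')` is the output of the carrier algorithm applied to `(C, w)`, then
`C ++ w` is Knuth equivalent to `w' ++ C'`. -/
theorem carrierRun_knuthEquiv (C w : List ℕ) (hC : C.Pairwise (· ≤ ·))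
    (hne : C ≠ []) :
    KnuthEquiv (C ++ w) ((carrierRun C w).2 ++ (carrierRun C w).1) := by
  induction w generalizing C with
  | nil => simp [carrierRun]; exact KnuthEquiv.rfl _
  | cons x w ih =>
    have h1 := single_step x C hC hne
    have hC' : (carrierNext C x).Pairwise (· ≤ ·) :=
      List.Pairwise.orderedInsert _ _ (hC.sublist (List.erase_sublist))
    have hne' : carrierNext C x ≠ [] := orderedInsert_ne_nil _ _
    have h2 := ih (carrierNext C x) hC' hne'
    have step1 : KnuthEquiv (C ++ x :: w)
        (carrierOut C x :: (carrierNext C x ++ w)) := by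
      have := h1.append_right w
      simpa [List.append_assoc] using this
    have step2 : KnuthEquiv (carrierOut C x :: (carrierNext C x ++ w))
        (carrierOut C x :: ((carrierRun (carrierNext C x) w).2 ++
          (carrierRun (carrierNext C x) w).1)) := h2.cons _
    show KnuthEquiv (C ++ x :: w) _
    simp only [carrierRun]
    exact step1.trans' step2
end

section
/- Conservation of the P-symbol in the standard box-ball system: let a: Z -> {1,...,n,e} be a state of the standard box-ball system (a bijection between the occupied boxes and the colors 1,...,n, all other boxes empty), and let a' be the state obtained after one step of the box-ball time evolution. Then the insertion tableau of the word of ball colors of a (read in order of increasing box label) equals the insertion tableau of the word of ball colors of a'. -/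
/-- Schensted row-insertion of `x` into a single row: returns the new row and
the bumped letter (if any). -/
def insertRow : List ℕ → ℕ → List ℕ × Option ℕ
  | [], x => ([x], none)
  | y :: r, x =>
      if x < y then (x :: r, some y)
      else
        let p := insertRow r x
        (y :: p.1, p.2)

/-- Row-insertion of a letter into a tableau (list of rows, top row first). -/
def insertTableau : List (List ℕ) → ℕ → List (List ℕ)
  | [], x => [[x]]
  | r :: t, x =>
      let p := insertRow r x
      match p.2 with
      | none => p.1 :: t
      | some y => p.1 :: insertTableau t y

/-- The insertion tableau (P-symbol) of a word, obtained by row-inserting its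
letters from left to right into the empty tableau. -/
def Tab (w : List ℕ) : List (List ℕ) := w.foldl insertTableau []

/-- A state of the standard box-ball system with `n` balls of distinct colors
`1, …, n`; the value `n + 1` denotes an empty box. Each color occurs in
exactly one box. -/
def BBSState (n : ℕ) (a : ℤ → ℕ) : Prop :=
  (∀ i, 1 ≤ a i ∧ a i ≤ n + 1) ∧ (∀ c, 1 ≤ c → c ≤ n → ∃! i, a i = c)

/-- `f` is the destination map of one step of the box-ball evolution:
for each occupied box `i`, `f i` is the least box `k > i` that is empty or
vacated by a ball of smaller color, and is not the destination of a ball of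
smaller color. -/
def IsDest (n : ℕ) (a : ℤ → ℕ) (f : ℤ → ℤ) : Prop :=
  ∀ i, a i ≤ n →
    IsLeast {k : ℤ | i < k ∧ (a k = n + 1 ∨ a k < a i) ∧
      ∀ j, a j ≤ n → a j < a i → f j ≠ k} (f i)

/-- One step of the box-ball time evolution: each ball moves from its box to
its destination, and all other boxes become empty. -/
def EvolveTo (n : ℕ) (a a' : ℤ → ℕ) : Prop :=
  ∃ f : ℤ → ℤ, IsDest n a f ∧
    (∀ i, a i ≤ n → a' (f i) = a i) ∧
    (∀ k : ℤ, (∀ i, a i ≤ n → f i ≠ k) → a' k = n + 1)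

/-- `w` is the bi-word of the state `a`: the list of pairs
(box label, ball color) of all occupied boxes, in increasing order of box
label. -/
def IsBiword (n : ℕ) (a : ℤ → ℕ) (w : List (ℤ × ℕ)) : Prop :=
  (w.map Prod.fst).Pairwise (· < ·) ∧
  (∀ p ∈ w, a p.1 = p.2 ∧ p.2 ≤ n) ∧
  (∀ i, a i ≤ n → (i, a i) ∈ w)

/-! ### Basic lemmas about `insertRow` -/

lemma insertRow_nil (t : ℕ) : insertRow [] t = ([t], none) := rfl

lemma insertRow_cons_lt {t b : ℕ} (v : List ℕ) (h : t < b) :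
    insertRow (b :: v) t = (t :: v, some b) := by
  simp [insertRow, h]

lemma insertRow_cons_ge {t b : ℕ} (v : List ℕ) (h : b ≤ t) :
    insertRow (b :: v) t = (b :: (insertRow v t).1, (insertRow v t).2) := by
  simp [insertRow, Nat.not_lt.2 h]

lemma insertRow_skip {t : ℕ} {u : List ℕ} (hu : ∀ a ∈ u, a ≤ t) (v : List ℕ) :
    insertRow (u ++ v) t = (u ++ (insertRow v t).1, (insertRow v t).2) := by
  induction u with
  | nil => simp
  | cons a u ih =>
      have ha : a ≤ t := hu a (by simp)
      rw [List.cons_append, insertRow_cons_ge _ ha,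
        ih (fun b hb => hu b (by simp [hb]))]
      simp

lemma insertRow_mid {t b : ℕ} {u : List ℕ} (hu : ∀ a ∈ u, a ≤ t) (h : t < b) (v : List ℕ) :
    insertRow (u ++ b :: v) t = (u ++ t :: v, some b) := by
  rw [insertRow_skip hu, insertRow_cons_lt v h]

lemma insertRow_last {t : ℕ} {u : List ℕ} (hu : ∀ a ∈ u, a ≤ t) :
    insertRow u t = (u ++ [t], none) := by
  have := insertRow_skip hu []
  simpa [insertRow_nil] using this

lemma insertRow_mem {t c : ℕ} : ∀ {r : List ℕ}, c ∈ (insertRow r t).1 → c = t ∨ c ∈ r := by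
  intro r
  induction r with
  | nil => intro h; simp [insertRow] at h; simp [h]
  | cons b v ih =>
      intro h
      by_cases hb : t < b
      · rw [insertRow_cons_lt v hb] at h
        rcases List.mem_cons.1 h with h | h
        · exact Or.inl h
        · exact Or.inr (by simp [h])
      · rw [insertRow_cons_ge v (Nat.not_lt.1 hb)] at h
        rcases List.mem_cons.1 h with h | h
        · exact Or.inr (by simp [h])
        · rcases ih h with h | h
          · exact Or.inl h
          · exact Or.inr (by simp [h])

lemma insertRow_bump_gt {t y : ℕ} : ∀ {r : List ℕ}, (insertRow r t).2 = some y → t < y := by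
  intro r
  induction r with
  | nil => intro h; simp [insertRow] at h
  | cons b v ih =>
      intro h
      by_cases hb : t < b
      · rw [insertRow_cons_lt v hb] at h
        simp at h; omega
      · rw [insertRow_cons_ge v (Nat.not_lt.1 hb)] at h
        exact ih h

/-- `insertRow` preserves sortedness of a row. -/
lemma insertRow_sorted {t : ℕ} : ∀ {r : List ℕ}, r.Pairwise (· ≤ ·) →
    ((insertRow r t).1).Pairwise (· ≤ ·) := by
  intro r
  induction r with
  | nil => intro _; simp [insertRow]
  | cons b v ih =>
      intro hs
      rw [List.pairwise_cons] at hs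
      by_cases hb : t < b
      · rw [insertRow_cons_lt v hb]
        exact List.pairwise_cons.2 ⟨fun c hc => le_of_lt (lt_of_lt_of_le hb (hs.1 c hc)), hs.2⟩
      · rw [insertRow_cons_ge v (Nat.not_lt.1 hb)]
        refine List.pairwise_cons.2 ⟨?_, ih hs.2⟩
        intro c hc
        rcases insertRow_mem hc with h | h
        · subst h; exact Nat.not_lt.1 hb
        · exact hs.1 c h


/-! ### Tracking a sequence of insertions into the first row -/

/-- Insert a list of letters into a row, collecting bumped letters. -/
def rowSeq : List ℕ → List ℕ → List ℕ × List ℕ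
  | r, [] => (r, [])
  | r, x :: L =>
      let p := insertRow r x
      let q := rowSeq p.1 L
      (q.1, p.2.elim q.2 (· :: q.2))

lemma rowSeq_nil (r : List ℕ) : rowSeq r [] = (r, []) := rfl

lemma rowSeq_cons (r : List ℕ) (x : ℕ) (L : List ℕ) :
    rowSeq r (x :: L) =
      ((rowSeq (insertRow r x).1 L).1,
        (insertRow r x).2.elim (rowSeq (insertRow r x).1 L).2
          (· :: (rowSeq (insertRow r x).1 L).2)) := rfl

lemma foldl_insertTableau_cons (t : List (List ℕ)) (r : List ℕ) (L : List ℕ) :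
    List.foldl insertTableau (r :: t) L
      = (rowSeq r L).1 :: List.foldl insertTableau t (rowSeq r L).2 := by
  induction L generalizing r t with
  | nil => simp [rowSeq]
  | cons x L ih =>
      rw [List.foldl_cons, rowSeq_cons]
      rcases h2 : (insertRow r x).2 with _ | y
      · have : insertTableau (r :: t) x = (insertRow r x).1 :: t := by
          simp [insertTableau, h2]
        rw [this, ih]
        simp [h2]
      · have : insertTableau (r :: t) x = (insertRow r x).1 :: insertTableau t y := by
          simp [insertTableau, h2]
        rw [this, ih]
        simp [h2]

/-! ### The Knuth relation -/

inductive KStep : List ℕ → List ℕ → Prop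
  | m1 (u v : List ℕ) {x y z : ℕ} (h1 : x ≤ y) (h2 : y < z) :
      KStep (u ++ [x, z, y] ++ v) (u ++ [z, x, y] ++ v)
  | m2 (u v : List ℕ) {x y z : ℕ} (h1 : x < y) (h2 : y ≤ z) :
      KStep (u ++ [y, x, z] ++ v) (u ++ [y, z, x] ++ v)

/-- Knuth equivalence. -/
def Keq : List ℕ → List ℕ → Prop := Relation.EqvGen KStep

lemma Keq.refl (l : List ℕ) : Keq l l := Relation.EqvGen.refl l
lemma Keq.symm {l m : List ℕ} (h : Keq l m) : Keq m l := Relation.EqvGen.symm _ _ h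
lemma Keq.trans {l m o : List ℕ} (h : Keq l m) (h' : Keq m o) : Keq l o :=
  Relation.EqvGen.trans _ _ _ h h'
lemma Keq.step {l m : List ℕ} (h : KStep l m) : Keq l m := Relation.EqvGen.rel _ _ h

lemma append_reassoc (p u m v q : List ℕ) :
    p ++ (u ++ m ++ v) ++ q = (p ++ u) ++ m ++ (v ++ q) := by
  simp [List.append_assoc]

lemma KStep.context {l m : List ℕ} (p q : List ℕ) (h : KStep l m) :
    KStep (p ++ l ++ q) (p ++ m ++ q) := by
  cases h with
  | @m1 u v x y z h1 h2 =>
      rw [append_reassoc, append_reassoc]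
      exact KStep.m1 _ _ h1 h2
  | @m2 u v x y z h1 h2 =>
      rw [append_reassoc, append_reassoc]
      exact KStep.m2 _ _ h1 h2

lemma Keq.context {l m : List ℕ} (p q : List ℕ) (h : Keq l m) :
    Keq (p ++ l ++ q) (p ++ m ++ q) := by
  induction h with
  | rel a b hab => exact Keq.step (hab.context p q)
  | refl a => exact Keq.refl _
  | symm a b _ ih => exact ih.symm
  | trans a b c _ _ ih1 ih2 => exact ih1.trans ih2

/-- Splitting a sorted list at a threshold. -/
lemma sorted_split {r : List ℕ} (hr : r.Pairwise (· ≤ ·)) (t : ℕ) :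
    ∃ u v, r = u ++ v ∧ (∀ a ∈ u, a ≤ t) ∧ (∀ b ∈ v, t < b) ∧
      u.Pairwise (· ≤ ·) ∧ v.Pairwise (· ≤ ·) := by
  induction r with
  | nil => exact ⟨[], [], by simp⟩
  | cons a r ih =>
      rw [List.pairwise_cons] at hr
      by_cases hat : a ≤ t
      · obtain ⟨u, v, he, hu, hv, hsu, hsv⟩ := ih hr.2
        refine ⟨a :: u, v, by simp [he], ?_, hv, ?_, hsv⟩
        · intro b hb; rcases List.mem_cons.1 hb with h | h
          · subst h; exact hat
          · exact hu b h
        · exact List.pairwise_cons.2 ⟨fun b hb => hr.1 b (by subst he; simp [hb]), hsu⟩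
      · refine ⟨[], a :: r, by simp, by simp, ?_, by simp, List.pairwise_cons.2 hr⟩
        intro b hb
        rcases List.mem_cons.1 hb with h | h
        · subst h; omega
        · exact lt_of_lt_of_le (Nat.not_le.1 hat) (hr.1 b h)

lemma rowSeq3 {r r1 r2 r3 : List ℕ} {x1 x2 x3 : ℕ} {o1 o2 o3 : Option ℕ}
    (h1 : insertRow r x1 = (r1, o1)) (h2 : insertRow r1 x2 = (r2, o2))
    (h3 : insertRow r2 x3 = (r3, o3)) :
    rowSeq r [x1, x2, x3] = (r3, o1.toList ++ o2.toList ++ o3.toList) := by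
  simp only [rowSeq, h1, h2, h3]
  cases o1 <;> cases o2 <;> cases o3 <;> simp [Option.elim]

lemma rowSeq_skip {A : List ℕ} {L : List ℕ} (h : ∀ a ∈ A, ∀ l ∈ L, a ≤ l) (r : List ℕ) :
    rowSeq (A ++ r) L = (A ++ (rowSeq r L).1, (rowSeq r L).2) := by
  induction L generalizing r with
  | nil => simp [rowSeq]
  | cons x L ih =>
      have hx : ∀ a ∈ A, a ≤ x := fun a ha => h a ha x (by simp)
      have h' : ∀ a ∈ A, ∀ l ∈ L, a ≤ l := fun a ha l hl => h a ha l (by simp [hl])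
      simp only [rowSeq, insertRow_skip hx, ih h']

/-- The possible patterns of bumped letters arising from a Knuth move. -/
def Pat (o1 o2 : List ℕ) : Prop :=
  o1 = o2 ∨
  (∃ a b c, a ≤ b ∧ b < c ∧
    ((o1 = [a, c, b] ∧ o2 = [c, a, b]) ∨ (o2 = [a, c, b] ∧ o1 = [c, a, b]))) ∨
  (∃ a b c, a < b ∧ b ≤ c ∧
    ((o1 = [b, a, c] ∧ o2 = [b, c, a]) ∨ (o2 = [b, a, c] ∧ o1 = [b, c, a])))

lemma row3_m1 {x y z : ℕ} (hxy : x ≤ y) (hyz : y < z) (B C D : List ℕ)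
    (hB : ∀ b ∈ B, x < b ∧ b ≤ y) (hC : ∀ c ∈ C, y < c ∧ c ≤ z)
    (hD : ∀ d ∈ D, z < d) (hsC : C.Pairwise (· ≤ ·)) (hsD : D.Pairwise (· ≤ ·)) :
    (rowSeq (B ++ C ++ D) [x, z, y]).1 = (rowSeq (B ++ C ++ D) [z, x, y]).1 ∧
    Pat (rowSeq (B ++ C ++ D) [x, z, y]).2 (rowSeq (B ++ C ++ D) [z, x, y]).2 := by
  cases B with
  | cons b B' =>
    have hb := hB b (by simp)
    have hB' : ∀ e ∈ B', x < e ∧ e ≤ y := fun e he => hB e (by simp [he])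
    cases C with
    | cons c C' =>
      have hc := hC c (by simp)
      have hC' : ∀ e ∈ C', y < e ∧ e ≤ z := fun e he => hC e (by simp [he])
      cases D with
      | cons d D' =>
        -- Case 1 : all blocks nonempty
        have hd := hD d (by simp)
        have hD' : ∀ e ∈ D', z < e := fun e he => hD e (by simp [he])
        have u2 : ∀ e ∈ x :: (B' ++ c :: C'), e ≤ z := by
          intro e he
          rcases List.mem_cons.1 he with rfl | he
          · omega
          rcases List.mem_append.1 he with he | he
          · have := hB' e he; omega
          rcases List.mem_cons.1 he with rfl | he
          · omega
          · have := hC' e he; omega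
        have u3 : ∀ e ∈ x :: B', e ≤ y := by
          intro e he
          rcases List.mem_cons.1 he with rfl | he
          · omega
          · have := hB' e he; omega
        have u1' : ∀ e ∈ b :: (B' ++ c :: C'), e ≤ z := by
          intro e he
          rcases List.mem_cons.1 he with rfl | he
          · omega
          · exact u2 e (by simp [he])
        have e1 : insertRow (b :: (B' ++ c :: (C' ++ d :: D'))) x
            = (x :: (B' ++ c :: (C' ++ d :: D')), some b) := insertRow_cons_lt _ hb.1
        have e2 : insertRow (x :: (B' ++ c :: (C' ++ d :: D'))) z
            = (x :: (B' ++ c :: (C' ++ z :: D')), some d) := by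
          simpa [List.append_assoc] using
            insertRow_mid (u := x :: (B' ++ c :: C')) (b := d) (v := D') u2 hd
        have e3 : insertRow (x :: (B' ++ c :: (C' ++ z :: D'))) y
            = (x :: (B' ++ y :: (C' ++ z :: D')), some c) := by
          simpa [List.append_assoc] using
            insertRow_mid (u := x :: B') (b := c) (v := C' ++ z :: D') u3 hc.1
        have e1' : insertRow (b :: (B' ++ c :: (C' ++ d :: D'))) z
            = (b :: (B' ++ c :: (C' ++ z :: D')), some d) := by
          simpa [List.append_assoc] using
            insertRow_mid (u := b :: (B' ++ c :: C')) (b := d) (v := D') u1' hd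
        have e2' : insertRow (b :: (B' ++ c :: (C' ++ z :: D'))) x
            = (x :: (B' ++ c :: (C' ++ z :: D')), some b) := insertRow_cons_lt _ hb.1
        have e3' := e3
        rw [show ((b :: B') ++ (c :: C') ++ (d :: D') : List ℕ)
            = b :: (B' ++ c :: (C' ++ d :: D')) by simp [List.append_assoc],
          rowSeq3 e1 e2 e3, rowSeq3 e1' e2' e3']
        refine ⟨rfl, Or.inr (Or.inl ⟨b, c, d, by omega, by omega, Or.inl ⟨by simp, by simp⟩⟩)⟩
      | nil =>
        -- Case 5a : D empty, B C nonempty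
        have u3 : ∀ e ∈ x :: B', e ≤ y := by
          intro e he
          rcases List.mem_cons.1 he with rfl | he
          · omega
          · have := hB' e he; omega
        have u2 : ∀ e ∈ x :: (B' ++ c :: C'), e ≤ z := by
          intro e he
          rcases List.mem_cons.1 he with rfl | he
          · omega
          rcases List.mem_append.1 he with he | he
          · have := hB' e he; omega
          rcases List.mem_cons.1 he with rfl | he
          · omega
          · have := hC' e he; omega
        have u1' : ∀ e ∈ b :: (B' ++ c :: C'), e ≤ z := by
          intro e he
          rcases List.mem_cons.1 he with rfl | he
          · omega
          · exact u2 e (by simp [he])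
        have e1 : insertRow (b :: (B' ++ c :: C')) x
            = (x :: (B' ++ c :: C'), some b) := insertRow_cons_lt _ hb.1
        have e2 : insertRow (x :: (B' ++ c :: C')) z
            = (x :: (B' ++ c :: (C' ++ [z])), none) := by
          simpa [List.append_assoc] using insertRow_last u2
        have e3 : insertRow (x :: (B' ++ c :: (C' ++ [z]))) y
            = (x :: (B' ++ y :: (C' ++ [z])), some c) := by
          simpa [List.append_assoc] using
            insertRow_mid (u := x :: B') (b := c) (v := C' ++ [z]) u3 hc.1
        have e1' : insertRow (b :: (B' ++ c :: C')) z
            = (b :: (B' ++ c :: (C' ++ [z])), none) := by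
          simpa [List.append_assoc] using insertRow_last u1'
        have e2' : insertRow (b :: (B' ++ c :: (C' ++ [z]))) x
            = (x :: (B' ++ c :: (C' ++ [z])), some b) := insertRow_cons_lt _ hb.1
        have e3' := e3
        rw [show ((b :: B') ++ (c :: C') ++ ([] : List ℕ) : List ℕ)
            = b :: (B' ++ c :: C') by simp [List.append_assoc],
          rowSeq3 e1 e2 e3, rowSeq3 e1' e2' e3']
        exact ⟨rfl, Or.inl (by simp)⟩
    | nil =>
      cases D with
      | cons d D' =>
        -- Case 3 : C empty, B D nonempty
        have hd := hD d (by simp)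
        have hD' : ∀ e ∈ D', z < e := fun e he => hD e (by simp [he])
        have u3 : ∀ e ∈ x :: B', e ≤ y := by
          intro e he
          rcases List.mem_cons.1 he with rfl | he
          · omega
          · have := hB' e he; omega
        have u2 : ∀ e ∈ x :: B', e ≤ z := fun e he => le_trans (u3 e he) (by omega)
        have u1' : ∀ e ∈ b :: B', e ≤ z := by
          intro e he
          rcases List.mem_cons.1 he with rfl | he
          · omega
          · have := hB' e he; omega
        have e1 : insertRow (b :: (B' ++ d :: D')) x
            = (x :: (B' ++ d :: D'), some b) := insertRow_cons_lt _ hb.1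
        have e2 : insertRow (x :: (B' ++ d :: D')) z
            = (x :: (B' ++ z :: D'), some d) := by
          simpa [List.append_assoc] using
            insertRow_mid (u := x :: B') (b := d) (v := D') u2 hd
        have e3 : insertRow (x :: (B' ++ z :: D')) y
            = (x :: (B' ++ y :: D'), some z) := by
          simpa [List.append_assoc] using
            insertRow_mid (u := x :: B') (b := z) (v := D') u3 hyz
        have e1' : insertRow (b :: (B' ++ d :: D')) z
            = (b :: (B' ++ z :: D'), some d) := by
          simpa [List.append_assoc] using
            insertRow_mid (u := b :: B') (b := d) (v := D') u1' hd
        have e2' : insertRow (b :: (B' ++ z :: D')) x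
            = (x :: (B' ++ z :: D'), some b) := insertRow_cons_lt _ hb.1
        have e3' := e3
        rw [show ((b :: B') ++ ([] : List ℕ) ++ (d :: D') : List ℕ)
            = b :: (B' ++ d :: D') by simp [List.append_assoc],
          rowSeq3 e1 e2 e3, rowSeq3 e1' e2' e3']
        refine ⟨rfl, Or.inr (Or.inl ⟨b, z, d, by omega, by omega, Or.inl ⟨by simp, by simp⟩⟩)⟩
      | nil =>
        -- Case 5c : C D empty, B nonempty
        have u3 : ∀ e ∈ x :: B', e ≤ y := by
          intro e he
          rcases List.mem_cons.1 he with rfl | he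
          · omega
          · have := hB' e he; omega
        have u2 : ∀ e ∈ x :: B', e ≤ z := fun e he => le_trans (u3 e he) (by omega)
        have u1' : ∀ e ∈ b :: B', e ≤ z := by
          intro e he
          rcases List.mem_cons.1 he with rfl | he
          · omega
          · have := hB' e he; omega
        have e1 : insertRow (b :: B') x = (x :: B', some b) := insertRow_cons_lt _ hb.1
        have e2 : insertRow (x :: B') z = (x :: (B' ++ [z]), none) := by
          simpa [List.append_assoc] using insertRow_last u2
        have e3 : insertRow (x :: (B' ++ [z])) y
            = (x :: (B' ++ [y]), some z) := by
          simpa [List.append_assoc] using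
            insertRow_mid (u := x :: B') (b := z) (v := ([] : List ℕ)) u3 hyz
        have e1' : insertRow (b :: B') z = (b :: (B' ++ [z]), none) := by
          simpa [List.append_assoc] using insertRow_last u1'
        have e2' : insertRow (b :: (B' ++ [z])) x
            = (x :: (B' ++ [z]), some b) := insertRow_cons_lt _ hb.1
        have e3' := e3
        rw [show ((b :: B') ++ ([] : List ℕ) ++ ([] : List ℕ) : List ℕ)
            = b :: B' by simp,
          rowSeq3 e1 e2 e3, rowSeq3 e1' e2' e3']
        exact ⟨rfl, Or.inl (by simp)⟩
  | nil =>
    cases C with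
    | cons c C' =>
      have hc := hC c (by simp)
      have hC' : ∀ e ∈ C', y < e ∧ e ≤ z := fun e he => hC e (by simp [he])
      have hsC' : ∀ e ∈ C', c ≤ e := fun e he => (List.pairwise_cons.1 hsC).1 e he
      cases D with
      | cons d D' =>
        -- Case 2 : B empty, C D nonempty
        have hd := hD d (by simp)
        have u2 : ∀ e ∈ x :: C', e ≤ z := by
          intro e he
          rcases List.mem_cons.1 he with rfl | he
          · omega
          · have := hC' e he; omega
        have u1' : ∀ e ∈ c :: C', e ≤ z := by
          intro e he
          rcases List.mem_cons.1 he with rfl | he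
          · omega
          · have := hC' e he; omega
        have e1 : insertRow (c :: (C' ++ d :: D')) x
            = (x :: (C' ++ d :: D'), some c) := insertRow_cons_lt _ (by omega)
        have e2 : insertRow (x :: (C' ++ d :: D')) z
            = (x :: (C' ++ z :: D'), some d) := by
          simpa [List.append_assoc] using
            insertRow_mid (u := x :: C') (b := d) (v := D') u2 hd
        have e1' : insertRow (c :: (C' ++ d :: D')) z
            = (c :: (C' ++ z :: D'), some d) := by
          simpa [List.append_assoc] using
            insertRow_mid (u := c :: C') (b := d) (v := D') u1' hd
        have e2' : insertRow (c :: (C' ++ z :: D')) x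
            = (x :: (C' ++ z :: D'), some c) := insertRow_cons_lt _ (by omega)
        cases C' with
        | cons c2 C2 =>
          have hc2 := hC' c2 (by simp)
          have e3 : insertRow (x :: (c2 :: C2 ++ z :: D')) y
              = (x :: (y :: (C2 ++ z :: D')), some c2) := by
            simpa [List.append_assoc] using
              insertRow_mid (u := [x]) (b := c2) (v := C2 ++ z :: D')
                (by intro e he; simp at he; omega) hc2.1
          rw [show (([] : List ℕ) ++ (c :: c2 :: C2) ++ (d :: D') : List ℕ)
              = c :: (c2 :: C2 ++ d :: D') by simp [List.append_assoc],
            rowSeq3 e1 e2 e3, rowSeq3 e1' e2' e3]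
          refine ⟨rfl, Or.inr (Or.inl ⟨c, c2, d, hsC' c2 (by simp), by omega,
            Or.inl ⟨by simp, by simp⟩⟩)⟩
        | nil =>
          have e3 : insertRow (x :: ([] ++ z :: D')) y
              = (x :: (y :: D'), some z) := by
            simpa using insertRow_mid (u := [x]) (b := z) (v := D')
              (by intro e he; simp at he; omega) hyz
          rw [show (([] : List ℕ) ++ [c] ++ (d :: D') : List ℕ)
              = c :: ([] ++ d :: D') by simp,
            rowSeq3 e1 e2 e3, rowSeq3 e1' e2' e3]
          refine ⟨by simp, Or.inr (Or.inl ⟨c, z, d, by omega, by omega,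
            Or.inl ⟨by simp, by simp⟩⟩)⟩
      | nil =>
        -- Case 5b : B D empty, C nonempty
        have u2 : ∀ e ∈ x :: C', e ≤ z := by
          intro e he
          rcases List.mem_cons.1 he with rfl | he
          · omega
          · have := hC' e he; omega
        have u1' : ∀ e ∈ c :: C', e ≤ z := by
          intro e he
          rcases List.mem_cons.1 he with rfl | he
          · omega
          · have := hC' e he; omega
        have e1 : insertRow (c :: C') x = (x :: C', some c) := insertRow_cons_lt _ (by omega)
        have e2 : insertRow (x :: C') z = (x :: (C' ++ [z]), none) := by
          simpa [List.append_assoc] using insertRow_last u2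
        have e1' : insertRow (c :: C') z = (c :: (C' ++ [z]), none) := by
          simpa [List.append_assoc] using insertRow_last u1'
        have e2' : insertRow (c :: (C' ++ [z])) x
            = (x :: (C' ++ [z]), some c) := insertRow_cons_lt _ (by omega)
        cases C' with
        | cons c2 C2 =>
          have hc2 := hC' c2 (by simp)
          have e3 : insertRow (x :: (c2 :: C2 ++ [z])) y
              = (x :: (y :: (C2 ++ [z])), some c2) := by
            simpa [List.append_assoc] using
              insertRow_mid (u := [x]) (b := c2) (v := C2 ++ [z])
                (by intro e he; simp at he; omega) hc2.1
          rw [show (([] : List ℕ) ++ (c :: c2 :: C2) ++ ([] : List ℕ) : List ℕ)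
              = c :: (c2 :: C2) by simp,
            rowSeq3 e1 e2 e3, rowSeq3 e1' e2' e3]
          exact ⟨rfl, Or.inl (by simp)⟩
        | nil =>
          have e3 : insertRow (x :: ([] ++ [z])) y = ([x, y], some z) := by
            simpa using insertRow_mid (u := [x]) (b := z) (v := ([] : List ℕ))
              (by intro e he; simp at he; omega) hyz
          rw [show (([] : List ℕ) ++ [c] ++ ([] : List ℕ) : List ℕ) = c :: [] by simp,
            rowSeq3 e1 e2 e3, rowSeq3 e1' e2' e3]
          exact ⟨by simp, Or.inl (by simp)⟩
    | nil =>
      cases D with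
      | cons d D' =>
        -- Case 4 : B C empty, D nonempty
        have hd := hD d (by simp)
        have hD' : ∀ e ∈ D', z < e := fun e he => hD e (by simp [he])
        have hsD' : ∀ e ∈ D', d ≤ e := fun e he => (List.pairwise_cons.1 hsD).1 e he
        have e1 : insertRow (d :: D') x = (x :: D', some d) := insertRow_cons_lt _ (by omega)
        have e1' : insertRow (d :: D') z = (z :: D', some d) := insertRow_cons_lt _ (by omega)
        have e2' : insertRow (z :: D') x = (x :: D', some z) := insertRow_cons_lt _ (by omega)
        cases D' with
        | cons d2 D2 =>
          have hd2 := hD' d2 (by simp)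
          have e2 : insertRow (x :: d2 :: D2) z = (x :: z :: D2, some d2) := by
            simpa using insertRow_mid (u := [x]) (b := d2) (v := D2) (t := z)
              (by intro e he; simp at he; omega) (by omega)
          have e3 : insertRow (x :: z :: D2) y = (x :: y :: D2, some z) := by
            simpa using insertRow_mid (u := [x]) (b := z) (v := D2)
              (by intro e he; simp at he; omega) hyz
          have e3' : insertRow (x :: d2 :: D2) y = (x :: y :: D2, some d2) := by
            simpa using insertRow_mid (u := [x]) (b := d2) (v := D2) (t := y)
              (by intro e he; simp at he; omega) (by omega)
          rw [show (([] : List ℕ) ++ ([] : List ℕ) ++ (d :: d2 :: D2) : List ℕ)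
              = d :: d2 :: D2 by simp,
            rowSeq3 e1 e2 e3, rowSeq3 e1' e2' e3']
          refine ⟨rfl, Or.inr (Or.inr ⟨z, d, d2, by omega, hsD' d2 (by simp),
            Or.inr ⟨by simp, by simp⟩⟩)⟩
        | nil =>
          have e2 : insertRow [x] z = ([x, z], none) := by
            simpa using insertRow_last (u := [x]) (by intro e he; simp at he; omega)
          have e3 : insertRow [x, z] y = ([x, y], some z) := by
            simpa using insertRow_mid (u := [x]) (b := z) (v := ([] : List ℕ))
              (by intro e he; simp at he; omega) hyz
          have e3' : insertRow [x] y = ([x, y], none) := by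
            simpa using insertRow_last (u := [x]) (by intro e he; simp at he; omega)
          rw [show (([] : List ℕ) ++ ([] : List ℕ) ++ [d] : List ℕ) = d :: [] by simp,
            rowSeq3 e1 e2 e3, rowSeq3 e1' e2' e3']
          exact ⟨rfl, Or.inl (by simp)⟩
      | nil =>
        -- Case 5d : everything empty
        have e1 : insertRow [] x = ([x], none) := rfl
        have e2 : insertRow [x] z = ([x, z], none) := by
          simpa using insertRow_last (u := [x]) (by intro e he; simp at he; omega)
        have e3 : insertRow [x, z] y = ([x, y], some z) := by
          simpa using insertRow_mid (u := [x]) (b := z) (v := ([] : List ℕ))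
            (by intro e he; simp at he; omega) hyz
        have e1' : insertRow [] z = ([z], none) := rfl
        have e2' : insertRow [z] x = ([x], some z) := insertRow_cons_lt _ (by omega)
        have e3' : insertRow [x] y = ([x, y], none) := by
          simpa using insertRow_last (u := [x]) (by intro e he; simp at he; omega)
        rw [show (([] : List ℕ) ++ ([] : List ℕ) ++ ([] : List ℕ) : List ℕ) = [] by simp,
          rowSeq3 e1 e2 e3, rowSeq3 e1' e2' e3']
        exact ⟨rfl, Or.inl (by simp)⟩

lemma row3_m2 {x y z : ℕ} (hxy : x < y) (hyz : y ≤ z) (B C D : List ℕ)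
    (hB : ∀ b ∈ B, x < b ∧ b ≤ y) (hC : ∀ c ∈ C, y < c ∧ c ≤ z)
    (hD : ∀ d ∈ D, z < d) (hsC : C.Pairwise (· ≤ ·)) (hsD : D.Pairwise (· ≤ ·)) :
    (rowSeq (B ++ C ++ D) [y, x, z]).1 = (rowSeq (B ++ C ++ D) [y, z, x]).1 ∧
    Pat (rowSeq (B ++ C ++ D) [y, x, z]).2 (rowSeq (B ++ C ++ D) [y, z, x]).2 := by
  cases B with
  | cons b B' =>
    have hb := hB b (by simp)
    have hB' : ∀ e ∈ B', x < e ∧ e ≤ y := fun e he => hB e (by simp [he])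
    have uB : ∀ e ∈ b :: B', e ≤ y := by
      intro e he
      rcases List.mem_cons.1 he with rfl | he
      · omega
      · have := hB' e he; omega
    cases C with
    | cons c C' =>
      have hc := hC c (by simp)
      have hC' : ∀ e ∈ C', y < e ∧ e ≤ z := fun e he => hC e (by simp [he])
      cases D with
      | cons d D' =>
        -- Case 1 : all nonempty
        have hd := hD d (by simp)
        have u3 : ∀ e ∈ x :: (B' ++ y :: C'), e ≤ z := by
          intro e he
          rcases List.mem_cons.1 he with rfl | he
          · omega
          rcases List.mem_append.1 he with he | he
          · have := hB' e he; omega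
          rcases List.mem_cons.1 he with rfl | he
          · omega
          · have := hC' e he; omega
        have u2' : ∀ e ∈ b :: (B' ++ y :: C'), e ≤ z := by
          intro e he
          rcases List.mem_cons.1 he with rfl | he
          · omega
          · exact u3 e (by simp [he])
        have e1 : insertRow (b :: (B' ++ c :: (C' ++ d :: D'))) y
            = (b :: (B' ++ y :: (C' ++ d :: D')), some c) := by
          simpa [List.append_assoc] using
            insertRow_mid (u := b :: B') (b := c) (v := C' ++ d :: D') uB hc.1
        have e2 : insertRow (b :: (B' ++ y :: (C' ++ d :: D'))) x
            = (x :: (B' ++ y :: (C' ++ d :: D')), some b) := insertRow_cons_lt _ hb.1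
        have e3 : insertRow (x :: (B' ++ y :: (C' ++ d :: D'))) z
            = (x :: (B' ++ y :: (C' ++ z :: D')), some d) := by
          simpa [List.append_assoc] using
            insertRow_mid (u := x :: (B' ++ y :: C')) (b := d) (v := D') u3 hd
        have e2' : insertRow (b :: (B' ++ y :: (C' ++ d :: D'))) z
            = (b :: (B' ++ y :: (C' ++ z :: D')), some d) := by
          simpa [List.append_assoc] using
            insertRow_mid (u := b :: (B' ++ y :: C')) (b := d) (v := D') u2' hd
        have e3' : insertRow (b :: (B' ++ y :: (C' ++ z :: D'))) x
            = (x :: (B' ++ y :: (C' ++ z :: D')), some b) := insertRow_cons_lt _ hb.1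
        rw [show ((b :: B') ++ (c :: C') ++ (d :: D') : List ℕ)
            = b :: (B' ++ c :: (C' ++ d :: D')) by simp [List.append_assoc],
          rowSeq3 e1 e2 e3, rowSeq3 e1 e2' e3']
        refine ⟨rfl, Or.inr (Or.inr ⟨b, c, d, by omega, by omega, Or.inl ⟨by simp, by simp⟩⟩)⟩
      | nil =>
        -- Case 5a : D empty
        have u3 : ∀ e ∈ x :: (B' ++ y :: C'), e ≤ z := by
          intro e he
          rcases List.mem_cons.1 he with rfl | he
          · omega
          rcases List.mem_append.1 he with he | he
          · have := hB' e he; omega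
          rcases List.mem_cons.1 he with rfl | he
          · omega
          · have := hC' e he; omega
        have u2' : ∀ e ∈ b :: (B' ++ y :: C'), e ≤ z := by
          intro e he
          rcases List.mem_cons.1 he with rfl | he
          · omega
          · exact u3 e (by simp [he])
        have e1 : insertRow (b :: (B' ++ c :: C')) y
            = (b :: (B' ++ y :: C'), some c) := by
          simpa [List.append_assoc] using
            insertRow_mid (u := b :: B') (b := c) (v := C') uB hc.1
        have e2 : insertRow (b :: (B' ++ y :: C')) x
            = (x :: (B' ++ y :: C'), some b) := insertRow_cons_lt _ hb.1
        have e3 : insertRow (x :: (B' ++ y :: C')) z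
            = (x :: (B' ++ y :: (C' ++ [z])), none) := by
          simpa [List.append_assoc] using insertRow_last u3
        have e2' : insertRow (b :: (B' ++ y :: C')) z
            = (b :: (B' ++ y :: (C' ++ [z])), none) := by
          simpa [List.append_assoc] using insertRow_last u2'
        have e3' : insertRow (b :: (B' ++ y :: (C' ++ [z]))) x
            = (x :: (B' ++ y :: (C' ++ [z])), some b) := insertRow_cons_lt _ hb.1
        rw [show ((b :: B') ++ (c :: C') ++ ([] : List ℕ) : List ℕ)
            = b :: (B' ++ c :: C') by simp [List.append_assoc],
          rowSeq3 e1 e2 e3, rowSeq3 e1 e2' e3']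
        exact ⟨rfl, Or.inl (by simp)⟩
    | nil =>
      cases D with
      | cons d D' =>
        -- Case 3 : C empty, B D nonempty
        have hd := hD d (by simp)
        have hD' : ∀ e ∈ D', z < e := fun e he => hD e (by simp [he])
        have hsD' : ∀ e ∈ D', d ≤ e := fun e he => (List.pairwise_cons.1 hsD).1 e he
        have u1 : ∀ e ∈ b :: B', e ≤ y := uB
        have u3 : ∀ e ∈ x :: (B' ++ [y]), e ≤ z := by
          intro e he
          rcases List.mem_cons.1 he with rfl | he
          · omega
          rcases List.mem_append.1 he with he | he
          · have := hB' e he; omega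
          · simp at he; omega
        have u2' : ∀ e ∈ b :: (B' ++ [y]), e ≤ z := by
          intro e he
          rcases List.mem_cons.1 he with rfl | he
          · omega
          · exact u3 e (by simp [he])
        have e1 : insertRow (b :: (B' ++ d :: D')) y
            = (b :: (B' ++ y :: D'), some d) := by
          simpa [List.append_assoc] using
            insertRow_mid (u := b :: B') (b := d) (v := D') u1 (by omega)
        have e2 : insertRow (b :: (B' ++ y :: D')) x
            = (x :: (B' ++ y :: D'), some b) := insertRow_cons_lt _ hb.1
        cases D' with
        | cons d2 D2 =>
          have hd2 : z < d2 := hD' d2 (by simp)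
          have e3 : insertRow (x :: (B' ++ y :: d2 :: D2)) z
              = (x :: (B' ++ y :: z :: D2), some d2) := by
            simpa [List.append_assoc] using
              insertRow_mid (u := x :: (B' ++ [y])) (b := d2) (v := D2) u3 hd2
          have e2' : insertRow (b :: (B' ++ y :: d2 :: D2)) z
              = (b :: (B' ++ y :: z :: D2), some d2) := by
            simpa [List.append_assoc] using
              insertRow_mid (u := b :: (B' ++ [y])) (b := d2) (v := D2) u2' hd2
          have e3' : insertRow (b :: (B' ++ y :: z :: D2)) x
              = (x :: (B' ++ y :: z :: D2), some b) := insertRow_cons_lt _ hb.1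
          rw [show ((b :: B') ++ ([] : List ℕ) ++ (d :: d2 :: D2) : List ℕ)
              = b :: (B' ++ d :: d2 :: D2) by simp [List.append_assoc],
            rowSeq3 e1 e2 e3, rowSeq3 e1 e2' e3']
          refine ⟨rfl, Or.inr (Or.inr ⟨b, d, d2, by omega, hsD' d2 (by simp),
            Or.inl ⟨by simp, by simp⟩⟩)⟩
        | nil =>
          have e3 : insertRow (x :: (B' ++ [y])) z
              = (x :: (B' ++ [y, z]), none) := by
            have := insertRow_last u3
            simpa [List.append_assoc] using this
          have e2' : insertRow (b :: (B' ++ [y])) z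
              = (b :: (B' ++ [y, z]), none) := by
            have := insertRow_last u2'
            simpa [List.append_assoc] using this
          have e3' : insertRow (b :: (B' ++ [y, z])) x
              = (x :: (B' ++ [y, z]), some b) := insertRow_cons_lt _ hb.1
          rw [show ((b :: B') ++ ([] : List ℕ) ++ [d] : List ℕ)
              = b :: (B' ++ [d]) by simp [List.append_assoc],
            rowSeq3 e1 e2 e3, rowSeq3 e1 e2' e3']
          exact ⟨rfl, Or.inl (by simp)⟩
      | nil =>
        -- Case 5c : C D empty, B nonempty
        have u3 : ∀ e ∈ x :: (B' ++ [y]), e ≤ z := by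
          intro e he
          rcases List.mem_cons.1 he with rfl | he
          · omega
          rcases List.mem_append.1 he with he | he
          · have := hB' e he; omega
          · simp at he; omega
        have u2' : ∀ e ∈ b :: (B' ++ [y]), e ≤ z := by
          intro e he
          rcases List.mem_cons.1 he with rfl | he
          · omega
          · exact u3 e (by simp [he])
        have e1 : insertRow (b :: B') y = (b :: (B' ++ [y]), none) := by
          simpa using insertRow_last uB
        have e2 : insertRow (b :: (B' ++ [y])) x
            = (x :: (B' ++ [y]), some b) := insertRow_cons_lt _ hb.1
        have e3 : insertRow (x :: (B' ++ [y])) z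
            = (x :: (B' ++ [y, z]), none) := by
          have := insertRow_last u3
          simpa [List.append_assoc] using this
        have e2' : insertRow (b :: (B' ++ [y])) z
            = (b :: (B' ++ [y, z]), none) := by
          have := insertRow_last u2'
          simpa [List.append_assoc] using this
        have e3' : insertRow (b :: (B' ++ [y, z])) x
            = (x :: (B' ++ [y, z]), some b) := insertRow_cons_lt _ hb.1
        rw [show ((b :: B') ++ ([] : List ℕ) ++ ([] : List ℕ) : List ℕ)
            = b :: B' by simp,
          rowSeq3 e1 e2 e3, rowSeq3 e1 e2' e3']
        exact ⟨rfl, Or.inl (by simp)⟩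
  | nil =>
    cases C with
    | cons c C' =>
      have hc := hC c (by simp)
      have hC' : ∀ e ∈ C', y < e ∧ e ≤ z := fun e he => hC e (by simp [he])
      cases D with
      | cons d D' =>
        -- Case 2 : B empty, C D nonempty
        have hd := hD d (by simp)
        have u3 : ∀ e ∈ x :: C', e ≤ z := by
          intro e he
          rcases List.mem_cons.1 he with rfl | he
          · omega
          · have := hC' e he; omega
        have u2' : ∀ e ∈ y :: C', e ≤ z := by
          intro e he
          rcases List.mem_cons.1 he with rfl | he
          · omega
          · have := hC' e he; omega
        have e1 : insertRow (c :: (C' ++ d :: D')) y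
            = (y :: (C' ++ d :: D'), some c) := insertRow_cons_lt _ hc.1
        have e2 : insertRow (y :: (C' ++ d :: D')) x
            = (x :: (C' ++ d :: D'), some y) := insertRow_cons_lt _ hxy
        have e3 : insertRow (x :: (C' ++ d :: D')) z
            = (x :: (C' ++ z :: D'), some d) := by
          simpa [List.append_assoc] using
            insertRow_mid (u := x :: C') (b := d) (v := D') u3 hd
        have e2' : insertRow (y :: (C' ++ d :: D')) z
            = (y :: (C' ++ z :: D'), some d) := by
          simpa [List.append_assoc] using
            insertRow_mid (u := y :: C') (b := d) (v := D') u2' hd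
        have e3' : insertRow (y :: (C' ++ z :: D')) x
            = (x :: (C' ++ z :: D'), some y) := insertRow_cons_lt _ hxy
        rw [show (([] : List ℕ) ++ (c :: C') ++ (d :: D') : List ℕ)
            = c :: (C' ++ d :: D') by simp,
          rowSeq3 e1 e2 e3, rowSeq3 e1 e2' e3']
        refine ⟨rfl, Or.inr (Or.inr ⟨y, c, d, by omega, by omega, Or.inl ⟨by simp, by simp⟩⟩)⟩
      | nil =>
        -- Case 5b : B D empty, C nonempty
        have u3 : ∀ e ∈ x :: C', e ≤ z := by
          intro e he
          rcases List.mem_cons.1 he with rfl | he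
          · omega
          · have := hC' e he; omega
        have u2' : ∀ e ∈ y :: C', e ≤ z := by
          intro e he
          rcases List.mem_cons.1 he with rfl | he
          · omega
          · have := hC' e he; omega
        have e1 : insertRow (c :: C') y = (y :: C', some c) := insertRow_cons_lt _ hc.1
        have e2 : insertRow (y :: C') x = (x :: C', some y) := insertRow_cons_lt _ hxy
        have e3 : insertRow (x :: C') z = (x :: (C' ++ [z]), none) := by
          simpa using insertRow_last u3
        have e2' : insertRow (y :: C') z = (y :: (C' ++ [z]), none) := by
          simpa using insertRow_last u2'
        have e3' : insertRow (y :: (C' ++ [z])) x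
            = (x :: (C' ++ [z]), some y) := insertRow_cons_lt _ hxy
        rw [show (([] : List ℕ) ++ (c :: C') ++ ([] : List ℕ) : List ℕ)
            = c :: C' by simp,
          rowSeq3 e1 e2 e3, rowSeq3 e1 e2' e3']
        exact ⟨rfl, Or.inl (by simp)⟩
    | nil =>
      cases D with
      | cons d D' =>
        -- Case 4 : B C empty, D nonempty
        have hd := hD d (by simp)
        have hD' : ∀ e ∈ D', z < e := fun e he => hD e (by simp [he])
        have hsD' : ∀ e ∈ D', d ≤ e := fun e he => (List.pairwise_cons.1 hsD).1 e he
        have e1 : insertRow (d :: D') y = (y :: D', some d) := insertRow_cons_lt _ (by omega)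
        have e2 : insertRow (y :: D') x = (x :: D', some y) := insertRow_cons_lt _ hxy
        cases D' with
        | cons d2 D2 =>
          have hd2 : z < d2 := hD' d2 (by simp)
          have e3 : insertRow (x :: d2 :: D2) z = (x :: z :: D2, some d2) := by
            simpa using insertRow_mid (u := [x]) (b := d2) (v := D2) (t := z)
              (by intro e he; simp at he; omega) (by omega)
          have e2' : insertRow (y :: d2 :: D2) z = (y :: z :: D2, some d2) := by
            simpa using insertRow_mid (u := [y]) (b := d2) (v := D2) (t := z)
              (by intro e he; simp at he; omega) (by omega)
          have e3' : insertRow (y :: z :: D2) x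
              = (x :: z :: D2, some y) := insertRow_cons_lt _ hxy
          rw [show (([] : List ℕ) ++ ([] : List ℕ) ++ (d :: d2 :: D2) : List ℕ)
              = d :: d2 :: D2 by simp,
            rowSeq3 e1 e2 e3, rowSeq3 e1 e2' e3']
          refine ⟨rfl, Or.inr (Or.inr ⟨y, d, d2, by omega, hsD' d2 (by simp),
            Or.inl ⟨by simp, by simp⟩⟩)⟩
        | nil =>
          have e3 : insertRow [x] z = ([x, z], none) := by
            simpa using insertRow_last (u := [x]) (by intro e he; simp at he; omega)
          have e2' : insertRow [y] z = ([y, z], none) := by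
            simpa using insertRow_last (u := [y]) (by intro e he; simp at he; omega)
          have e3' : insertRow [y, z] x = ([x, z], some y) := insertRow_cons_lt _ hxy
          rw [show (([] : List ℕ) ++ ([] : List ℕ) ++ [d] : List ℕ) = d :: [] by simp,
            rowSeq3 e1 e2 e3, rowSeq3 e1 e2' e3']
          exact ⟨rfl, Or.inl (by simp)⟩
      | nil =>
        -- Case 5d : everything empty
        have e1 : insertRow [] y = ([y], none) := rfl
        have e2 : insertRow [y] x = ([x], some y) := insertRow_cons_lt _ hxy
        have e3 : insertRow [x] z = ([x, z], none) := by
          simpa using insertRow_last (u := [x]) (by intro e he; simp at he; omega)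
        have e2' : insertRow [y] z = ([y, z], none) := by
          simpa using insertRow_last (u := [y]) (by intro e he; simp at he; omega)
        have e3' : insertRow [y, z] x = ([x, z], some y) := insertRow_cons_lt _ hxy
        rw [show (([] : List ℕ) ++ ([] : List ℕ) ++ ([] : List ℕ) : List ℕ) = [] by simp,
          rowSeq3 e1 e2 e3, rowSeq3 e1 e2' e3']
        exact ⟨rfl, Or.inl (by simp)⟩

def RowsSorted (T : List (List ℕ)) : Prop := ∀ r ∈ T, r.Pairwise (· ≤ ·)

lemma insertTableau_rowsSorted {t : ℕ} : ∀ {T : List (List ℕ)}, RowsSorted T →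
    RowsSorted (insertTableau T t) := by
  intro T
  induction T generalizing t with
  | nil =>
      intro _ r hr
      simp [insertTableau] at hr
      simp [hr]
  | cons r T ih =>
      intro hT s hs
      have hr : r.Pairwise (· ≤ ·) := hT r (by simp)
      have hT' : RowsSorted T := fun q hq => hT q (by simp [hq])
      rcases h2 : (insertRow r t).2 with _ | y
      · have : insertTableau (r :: T) t = (insertRow r t).1 :: T := by
          simp [insertTableau, h2]
        rw [this] at hs
        rcases List.mem_cons.1 hs with rfl | hs
        · exact insertRow_sorted hr
        · exact hT' s hs
      · have : insertTableau (r :: T) t = (insertRow r t).1 :: insertTableau T y := by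
          simp [insertTableau, h2]
        rw [this] at hs
        rcases List.mem_cons.1 hs with rfl | hs
        · exact insertRow_sorted hr
        · exact ih hT' s hs

lemma foldl_rowsSorted {L : List ℕ} : ∀ {T : List (List ℕ)}, RowsSorted T →
    RowsSorted (List.foldl insertTableau T L) := by
  induction L with
  | nil => intro T h; simpa using h
  | cons x L ih => intro T h; exact ih (insertTableau_rowsSorted h)

lemma fold3 : ∀ (T : List (List ℕ)), RowsSorted T →
    (∀ x y z : ℕ, x ≤ y → y < z →
      List.foldl insertTableau T [x, z, y] = List.foldl insertTableau T [z, x, y]) ∧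
    (∀ x y z : ℕ, x < y → y ≤ z →
      List.foldl insertTableau T [y, x, z] = List.foldl insertTableau T [y, z, x]) := by
  intro T
  induction T with
  | nil =>
      intro _
      constructor
      · intro x y z h1 h2
        have a2 : insertTableau [[x]] z = [[x, z]] := by
          simp [insertTableau, insertRow_cons_ge _ (show x ≤ z by omega), insertRow_nil]
        have a3 : insertTableau [[x, z]] y = [[x, y], [z]] := by
          simp [insertTableau, insertRow_cons_ge _ h1, insertRow_cons_lt _ h2]
        have b2 : insertTableau [[z]] x = [[x], [z]] := by
          simp [insertTableau, insertRow_cons_lt _ (show x < z by omega)]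
        have b3 : insertTableau [[x], [z]] y = [[x, y], [z]] := by
          simp [insertTableau, insertRow_cons_ge _ h1, insertRow_nil]
        simp only [List.foldl, show insertTableau [] x = [[x]] from rfl,
          show insertTableau [] z = [[z]] from rfl, a2, a3, b2, b3]
      · intro x y z h1 h2
        have a2 : insertTableau [[y]] x = [[x], [y]] := by
          simp [insertTableau, insertRow_cons_lt _ h1]
        have a3 : insertTableau [[x], [y]] z = [[x, z], [y]] := by
          simp [insertTableau, insertRow_cons_ge _ (show x ≤ z by omega), insertRow_nil]
        have b2 : insertTableau [[y]] z = [[y, z]] := by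
          simp [insertTableau, insertRow_cons_ge _ h2, insertRow_nil]
        have b3 : insertTableau [[y, z]] x = [[x, z], [y]] := by
          simp [insertTableau, insertRow_cons_lt _ h1]
        simp only [List.foldl, show insertTableau [] y = [[y]] from rfl, a2, a3, b2, b3]
  | cons r T ih =>
      intro hT
      have hr : r.Pairwise (· ≤ ·) := hT r (by simp)
      have hT' : RowsSorted T := fun q hq => hT q (by simp [hq])
      have IH := ih hT'
      have key : ∀ o1 o2 : List ℕ, Pat o1 o2 →
          List.foldl insertTableau T o1 = List.foldl insertTableau T o2 := by
        intro o1 o2 hp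
        rcases hp with rfl | ⟨a, b, c, hab, hbc, ⟨h1, h2⟩ | ⟨h1, h2⟩⟩ |
          ⟨a, b, c, hab, hbc, ⟨h1, h2⟩ | ⟨h1, h2⟩⟩
        · rfl
        · rw [h1, h2]; exact IH.1 a b c hab hbc
        · rw [h1, h2]; exact (IH.1 a b c hab hbc).symm
        · rw [h1, h2]; exact IH.2 a b c hab hbc
        · rw [h1, h2]; exact (IH.2 a b c hab hbc).symm
      constructor
      · intro x y z h1 h2
        obtain ⟨A, r1, rfl, hA, hr1, hsA, hsr1⟩ := sorted_split hr x
        obtain ⟨B, r2, rfl, hBle, hr2, hsB, hsr2⟩ := sorted_split hsr1 y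
        obtain ⟨C, D, rfl, hCle, hDgt, hsC, hsD⟩ := sorted_split hsr2 z
        have hB : ∀ b ∈ B, x < b ∧ b ≤ y := fun b hb =>
          ⟨hr1 b (by simp [hb]), hBle b hb⟩
        have hC : ∀ c ∈ C, y < c ∧ c ≤ z := fun c hc =>
          ⟨hr2 c (by simp [hc]), hCle c hc⟩
        have hskip : ∀ a ∈ A, ∀ l ∈ [x, z, y], a ≤ l := by
          intro a ha l hl
          have := hA a ha
          rcases List.mem_cons.1 hl with rfl | hl
          · omega
          rcases List.mem_cons.1 hl with rfl | hl
          · omega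
          simp at hl; omega
        have hskip' : ∀ a ∈ A, ∀ l ∈ [z, x, y], a ≤ l := by
          intro a ha l hl
          have := hA a ha
          simp at hl
          rcases hl with rfl | rfl | rfl <;> omega
        rw [foldl_insertTableau_cons, foldl_insertTableau_cons]
        rw [rowSeq_skip hskip, rowSeq_skip hskip']
        have hm := row3_m1 h1 h2 B C D hB hC hDgt hsC hsD
        rw [show (B ++ (C ++ D) : List ℕ) = B ++ C ++ D by simp [List.append_assoc]]
        rw [hm.1, key _ _ hm.2]
      · intro x y z h1 h2
        obtain ⟨A, r1, rfl, hA, hr1, hsA, hsr1⟩ := sorted_split hr x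
        obtain ⟨B, r2, rfl, hBle, hr2, hsB, hsr2⟩ := sorted_split hsr1 y
        obtain ⟨C, D, rfl, hCle, hDgt, hsC, hsD⟩ := sorted_split hsr2 z
        have hB : ∀ b ∈ B, x < b ∧ b ≤ y := fun b hb =>
          ⟨hr1 b (by simp [hb]), hBle b hb⟩
        have hC : ∀ c ∈ C, y < c ∧ c ≤ z := fun c hc =>
          ⟨hr2 c (by simp [hc]), hCle c hc⟩
        have hskip : ∀ a ∈ A, ∀ l ∈ [y, x, z], a ≤ l := by
          intro a ha l hl
          have := hA a ha
          simp at hl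
          rcases hl with rfl | rfl | rfl <;> omega
        have hskip' : ∀ a ∈ A, ∀ l ∈ [y, z, x], a ≤ l := by
          intro a ha l hl
          have := hA a ha
          simp at hl
          rcases hl with rfl | rfl | rfl <;> omega
        rw [foldl_insertTableau_cons, foldl_insertTableau_cons]
        rw [rowSeq_skip hskip, rowSeq_skip hskip']
        have hm := row3_m2 h1 h2 B C D hB hC hDgt hsC hsD
        rw [show (B ++ (C ++ D) : List ℕ) = B ++ C ++ D by simp [List.append_assoc]]
        rw [hm.1, key _ _ hm.2]

lemma KStep_tab {u v : List ℕ} (h : KStep u v) : Tab u = Tab v := by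
  have hs : ∀ w : List ℕ, RowsSorted (List.foldl insertTableau [] w) :=
    fun w => foldl_rowsSorted (by intro r hr; simp at hr)
  cases h with
  | @m1 p q x y z h1 h2 =>
      show List.foldl insertTableau [] _ = List.foldl insertTableau [] _
      rw [List.foldl_append, List.foldl_append, List.foldl_append, List.foldl_append]
      rw [(fold3 _ (hs p)).1 x y z h1 h2]
  | @m2 p q x y z h1 h2 =>
      show List.foldl insertTableau [] _ = List.foldl insertTableau [] _
      rw [List.foldl_append, List.foldl_append, List.foldl_append, List.foldl_append]
      rw [(fold3 _ (hs p)).2 x y z h1 h2]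

lemma Keq_tab {u v : List ℕ} (h : Keq u v) : Tab u = Tab v := by
  induction h with
  | rel a b hab => exact KStep_tab hab
  | refl a => rfl
  | symm a b _ ih => exact ih.symm
  | trans a b c _ _ ih1 ih2 => exact ih1.trans ih2

lemma K_bubble : ∀ (r : List ℕ) (c x : ℕ), (c :: r).Pairwise (· ≤ ·) →
    (∀ e ∈ c :: r, x < e) → Keq ((c :: r) ++ [x]) (c :: x :: r) := by
  intro r
  induction r with
  | nil => intro c x _ _; exact Keq.refl _
  | cons d r' ih =>
      intro c x hs hx
      have hs' := List.pairwise_cons.1 hs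
      have ih' : Keq ((d :: r') ++ [x]) (d :: x :: r') :=
        ih d x hs'.2 (fun e he => hx e (by simp [List.mem_cons.1 he]))
      have h1 : Keq (c :: ((d :: r') ++ [x])) (c :: d :: x :: r') := by
        simpa using Keq.context [c] [] ih'
      have hcd : c ≤ d := hs'.1 d (by simp)
      have hxc : x < c := hx c (by simp)
      have h2 : Keq (c :: x :: d :: r') (c :: d :: x :: r') := by
        simpa using Keq.step (KStep.m2 [] r' hxc hcd)
      exact (h1.trans h2.symm : _)

lemma K_insertRow : ∀ (r : List ℕ), r.Pairwise (· ≤ ·) → ∀ {t y : ℕ} {r' : List ℕ},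
    insertRow r t = (r', some y) → Keq (r ++ [t]) (y :: r') := by
  intro r
  induction r with
  | nil => intro _ t y r' h; simp [insertRow] at h
  | cons c v ih =>
      intro hs t y r' h
      have hs' := List.pairwise_cons.1 hs
      by_cases htc : t < c
      · rw [insertRow_cons_lt _ htc, Prod.mk.injEq] at h
        obtain ⟨hl, hr⟩ := h
        have hy : c = y := Option.some.inj hr
        subst hl; subst hy
        exact K_bubble v c t hs (by
          intro e he
          rcases List.mem_cons.1 he with rfl | he
          · exact htc
          · exact lt_of_lt_of_le htc (hs'.1 e he))
      · rw [insertRow_cons_ge _ (Nat.not_lt.1 htc), Prod.mk.injEq] at h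
        obtain ⟨hl, hr⟩ := h
        subst hl
        cases v with
        | nil => simp [insertRow] at hr
        | cons e v' =>
            have hce : c ≤ e := hs'.1 e (by simp)
            have hsv := hs'.2
            have hIH : Keq ((e :: v') ++ [t]) (y :: (insertRow (e :: v') t).1) :=
              ih hsv (Prod.ext rfl hr)
            have h1 : Keq (c :: ((e :: v') ++ [t]))
                (c :: y :: (insertRow (e :: v') t).1) := by
              simpa using Keq.context [c] [] hIH
            have hty : t < y := insertRow_bump_gt hr
            -- the head of (insertRow (e::v') t).1 is `min t e`, in every case ≥ c and < y
            by_cases hte : t < e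
            · rw [insertRow_cons_lt _ hte] at h1 ⊢
              have h2 : Keq (c :: y :: t :: v') (y :: c :: t :: v') := by
                simpa using Keq.step (KStep.m1 [] v' (Nat.not_lt.1 htc) hty)
              exact (h1.trans h2 : _)
            · rw [insertRow_cons_ge _ (Nat.not_lt.1 hte)] at h1 ⊢
              have hey : e < y := lt_of_le_of_lt (Nat.not_lt.1 hte) hty
              have h2 : Keq (c :: y :: e :: (insertRow v' t).1)
                  (y :: c :: e :: (insertRow v' t).1) := by
                simpa using Keq.step (KStep.m1 [] (insertRow v' t).1 hce hey)
              exact (h1.trans h2 : _)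

lemma KStep_filter (k : ℕ) {u v : List ℕ} (h : KStep u v) :
    Keq (u.filter (· ≤ k)) (v.filter (· ≤ k)) := by
  cases h with
  | @m1 p q x y z h1 h2 =>
      simp only [List.filter_append]
      by_cases hz : z ≤ k
      · have hy : y ≤ k := by omega
        have hx : x ≤ k := by omega
        rw [show List.filter (· ≤ k) [x, z, y] = [x, z, y] by simp [hx, hy, hz],
          show List.filter (· ≤ k) [z, x, y] = [z, x, y] by simp [hx, hy, hz]]
        exact Keq.step (KStep.m1 _ _ h1 h2)
      · by_cases hx : x ≤ k <;> by_cases hy : y ≤ k <;>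
          [skip; skip; omega; skip] <;>
          · rw [show List.filter (· ≤ k) [x, z, y] = List.filter (· ≤ k) [z, x, y] by
              simp [hx, hy, hz]]
            exact Keq.refl _
  | @m2 p q x y z h1 h2 =>
      simp only [List.filter_append]
      by_cases hz : z ≤ k
      · have hy : y ≤ k := by omega
        have hx : x ≤ k := by omega
        rw [show List.filter (· ≤ k) [y, x, z] = [y, x, z] by simp [hx, hy, hz],
          show List.filter (· ≤ k) [y, z, x] = [y, z, x] by simp [hx, hy, hz]]
        exact Keq.step (KStep.m2 _ _ h1 h2)
      · by_cases hx : x ≤ k <;> by_cases hy : y ≤ k <;>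
          · rw [show List.filter (· ≤ k) [y, x, z] = List.filter (· ≤ k) [y, z, x] by
              simp [hx, hy, hz]]
            exact Keq.refl _

lemma Keq_filter (k : ℕ) {u v : List ℕ} (h : Keq u v) :
    Keq (u.filter (· ≤ k)) (v.filter (· ≤ k)) := by
  induction h with
  | rel a b hab => exact KStep_filter k hab
  | refl a => exact Keq.refl _
  | symm a b _ ih => exact ih.symm
  | trans a b c _ _ ih1 ih2 => exact ih1.trans ih2

/-! ### The carrier chain -/

lemma K_chain (Cs : ℕ → List ℕ) (A outs : ℕ → ℕ)
    (hC : ∀ k, (Cs k).Pairwise (· ≤ ·)) (hne : ∀ k, Cs k ≠ [])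
    (hstep : ∀ k, (insertRow (Cs k) (A k) = (Cs (k + 1), some (outs k))) ∨
      ((insertRow (Cs k) (A k)).2 = none ∧ Cs (k + 1) = (Cs k).tail ++ [A k] ∧
        outs k = (Cs k).headI)) :
    ∀ N, Keq (Cs 0 ++ (List.range N).map A) ((List.range N).map outs ++ Cs N) := by
  intro N
  induction N with
  | zero => simpa using Keq.refl (Cs 0)
  | succ N ih =>
      rw [List.range_succ, List.map_append, List.map_append]
      simp only [List.map_cons, List.map_nil]
      have h1 : Keq (Cs 0 ++ ((List.range N).map A ++ [A N]))
          ((List.range N).map outs ++ (Cs N ++ [A N])) := by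
        have := Keq.context [] [A N] ih
        simpa [List.append_assoc] using this
      have h2 : Keq (Cs N ++ [A N]) (outs N :: Cs (N + 1)) := by
        rcases hstep N with h | ⟨hnone, htail, hout⟩
        · exact K_insertRow (Cs N) (hC N) h
        · obtain ⟨hd, tl, hcons⟩ := List.exists_cons_of_ne_nil (hne N)
          rw [htail, hout, hcons]
          exact Keq.refl _
      have h3 : Keq ((List.range N).map outs ++ (Cs N ++ [A N]))
          ((List.range N).map outs ++ (outs N :: Cs (N + 1))) := by
        have := Keq.context ((List.range N).map outs) [] h2
        simpa [List.append_assoc] using this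
      have h4 : ((List.range N).map outs ++ [outs N]) ++ Cs (N + 1)
          = (List.range N).map outs ++ (outs N :: Cs (N + 1)) := by
        simp [List.append_assoc]
      rw [h4]
      exact (h1.trans h3 : _)

/-! ### Positions of balls -/

noncomputable def posn (n : ℕ) (a : ℤ → ℕ) (ha : BBSState n a) (c : ℕ) : ℤ :=
  if h : 1 ≤ c ∧ c ≤ n then (ha.2 c h.1 h.2).choose else 0

lemma posn_spec {n : ℕ} {a : ℤ → ℕ} (ha : BBSState n a) {c : ℕ} (h1 : 1 ≤ c) (h2 : c ≤ n) :
    a (posn n a ha c) = c := by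
  rw [posn, dif_pos ⟨h1, h2⟩]
  exact (ha.2 c h1 h2).choose_spec.1

lemma posn_eq {n : ℕ} {a : ℤ → ℕ} (ha : BBSState n a) {i : ℤ} (hi : a i ≤ n) :
    posn n a ha (a i) = i := by
  have h1 : 1 ≤ a i := (ha.1 i).1
  rw [posn, dif_pos ⟨h1, hi⟩]
  exact ((ha.2 (a i) h1 hi).choose_spec.2 i rfl).symm

/-- The set of colors of balls in transit when the carrier is about to treat box `b`. -/
noncomputable def TK (n : ℕ) (a : ℤ → ℕ) (ha : BBSState n a) (f : ℤ → ℤ) (b : ℤ) : Finset ℕ :=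
  (Finset.Icc 1 n).filter (fun c => posn n a ha c < b ∧ b ≤ f (posn n a ha c))

lemma mem_TK {n : ℕ} {a : ℤ → ℕ} {ha : BBSState n a} {f : ℤ → ℤ} {b : ℤ} {c : ℕ} :
    c ∈ TK n a ha f b ↔
      (1 ≤ c ∧ c ≤ n) ∧ posn n a ha c < b ∧ b ≤ f (posn n a ha c) := by
  simp [TK, Finset.mem_filter, Finset.mem_Icc, and_assoc]

/-- The carrier contents at box `b`. -/
noncomputable def carrier (n : ℕ) (a : ℤ → ℕ) (ha : BBSState n a) (f : ℤ → ℤ) (b : ℤ) :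
    List ℕ :=
  (TK n a ha f b).sort (· ≤ ·) ++ List.replicate (n - (TK n a ha f b).card) (n + 1)

lemma TK_card_le {n : ℕ} {a : ℤ → ℕ} {ha : BBSState n a} {f : ℤ → ℤ} {b : ℤ} :
    (TK n a ha f b).card ≤ n := by
  calc (TK n a ha f b).card ≤ (Finset.Icc 1 n).card := Finset.card_filter_le _ _
  _ = n := by simp

lemma TK_le {n : ℕ} {a : ℤ → ℕ} {ha : BBSState n a} {f : ℤ → ℤ} {b : ℤ} {c : ℕ}
    (h : c ∈ TK n a ha f b) : c ≤ n := (mem_TK.1 h).1.2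

lemma sorted_replicate' (m x : ℕ) : (List.replicate m x).Pairwise (· ≤ ·) := by
  induction m with
  | zero => simp
  | succ m ih =>
      rw [List.replicate_succ]
      exact List.pairwise_cons.2 ⟨fun b hb => le_of_eq (List.eq_of_mem_replicate hb).symm, ih⟩

lemma carrier_sorted {n : ℕ} {a : ℤ → ℕ} {ha : BBSState n a} {f : ℤ → ℤ} {b : ℤ} :
    (carrier n a ha f b).Pairwise (· ≤ ·) := by
  rw [carrier, List.pairwise_append]
  refine ⟨Finset.pairwise_sort _ _, sorted_replicate' _ _, ?_⟩
  intro u hu v hv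
  have := TK_le ((Finset.mem_sort (α := ℕ) (· ≤ ·)).1 hu)
  have := List.eq_of_mem_replicate hv
  omega

lemma carrier_length {n : ℕ} {a : ℤ → ℕ} {ha : BBSState n a} {f : ℤ → ℤ} {b : ℤ} :
    (carrier n a ha f b).length = n := by
  rw [carrier]
  simp [Finset.length_sort]
  have := TK_card_le (ha := ha) (f := f) (b := b)
  omega

lemma carrier_ne_nil {n : ℕ} {a : ℤ → ℕ} {ha : BBSState n a} {f : ℤ → ℤ} {b : ℤ}
    (hn : 1 ≤ n) : carrier n a ha f b ≠ [] := by
  intro h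
  have := carrier_length (ha := ha) (f := f) (b := b)
  rw [h] at this
  simp at this
  omega

section BBSLemmas

variable {n : ℕ} {a a' : ℤ → ℕ} {f : ℤ → ℤ}

lemma f_gt (hf : IsDest n a f) {i : ℤ} (hi : a i ≤ n) : i < f i := (hf i hi).1.1

lemma f_inj (ha : BBSState n a) (hev2 : ∀ i, a i ≤ n → a' (f i) = a i)
    {i j : ℤ} (hi : a i ≤ n) (hj : a j ≤ n) (hij : f i = f j) : i = j := by
  have h1 := hev2 i hi
  have h2 := hev2 j hj
  rw [hij, h2] at h1
  -- h1 : a j = a i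
  have hu := ha.2 (a i) (ha.1 i).1 hi
  exact ((hu.choose_spec.2 j h1).trans (hu.choose_spec.2 i rfl).symm).symm

lemma ball_in_TK (ha : BBSState n a) (hf : IsDest n a f) {j b : ℤ}
    (hj : a j ≤ n) (hfj : f j = b) : a j ∈ TK n a ha f b := by
  rw [mem_TK]
  refine ⟨⟨(ha.1 j).1, hj⟩, ?_, ?_⟩ <;> rw [posn_eq ha hj]
  · rw [← hfj]; exact f_gt hf hj
  · omega

lemma land_occ (ha : BBSState n a) (hf : IsDest n a f) {b : ℤ} (hb : a b ≤ n) {c₀ : ℕ}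
    (hc₀ : c₀ ∈ TK n a ha f b) (hgt : a b < c₀)
    (hmin : ∀ c ∈ TK n a ha f b, a b < c → c₀ ≤ c) : f (posn n a ha c₀) = b := by
  obtain ⟨⟨h1, h2⟩, hlt, hle⟩ := mem_TK.1 hc₀
  have hai : a (posn n a ha c₀) = c₀ := posn_spec ha h1 h2
  have hin : a (posn n a ha c₀) ≤ n := by omega
  have hbmem : b ∈ {k : ℤ | posn n a ha c₀ < k ∧
      (a k = n + 1 ∨ a k < a (posn n a ha c₀)) ∧
      ∀ j, a j ≤ n → a j < a (posn n a ha c₀) → f j ≠ k} := by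
    refine ⟨hlt, Or.inr (by omega), ?_⟩
    intro j hjn hjlt hfj
    have hmem : a j ∈ TK n a ha f b := ball_in_TK ha hf hjn hfj
    have hcond := (hf j hjn).1.2.1
    rw [hfj] at hcond
    have habj : a b < a j := by omega
    have := hmin (a j) hmem habj
    omega
  exact le_antisymm ((hf _ hin).2 hbmem) hle

lemma land_emp (ha : BBSState n a) (hf : IsDest n a f) {b : ℤ} (hb : a b = n + 1) {c₀ : ℕ}
    (hc₀ : c₀ ∈ TK n a ha f b) (hmin : ∀ c ∈ TK n a ha f b, c₀ ≤ c) :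
    f (posn n a ha c₀) = b := by
  obtain ⟨⟨h1, h2⟩, hlt, hle⟩ := mem_TK.1 hc₀
  have hai : a (posn n a ha c₀) = c₀ := posn_spec ha h1 h2
  have hin : a (posn n a ha c₀) ≤ n := by omega
  have hbmem : b ∈ {k : ℤ | posn n a ha c₀ < k ∧
      (a k = n + 1 ∨ a k < a (posn n a ha c₀)) ∧
      ∀ j, a j ≤ n → a j < a (posn n a ha c₀) → f j ≠ k} := by
    refine ⟨hlt, Or.inl hb, ?_⟩
    intro j hjn hjlt hfj
    have hmem : a j ∈ TK n a ha f b := ball_in_TK ha hf hjn hfj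
    have := hmin (a j) hmem
    omega
  exact le_antisymm ((hf _ hin).2 hbmem) hle

lemma no_land_occ (ha : BBSState n a) (hf : IsDest n a f) {b : ℤ} (hb : a b ≤ n)
    (hall : ∀ c ∈ TK n a ha f b, c ≤ a b) : ∀ j, a j ≤ n → f j ≠ b := by
  intro j hjn hfj
  have hmem : a j ∈ TK n a ha f b := ball_in_TK ha hf hjn hfj
  have hcond := (hf j hjn).1.2.1
  rw [hfj] at hcond
  have := hall (a j) hmem
  omega

lemma no_land_emp (ha : BBSState n a) (hf : IsDest n a f) {b : ℤ}
    (hTK : TK n a ha f b = ∅) : ∀ j, a j ≤ n → f j ≠ b := by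
  intro j hjn hfj
  have hmem : a j ∈ TK n a ha f b := ball_in_TK ha hf hjn hfj
  rw [hTK] at hmem
  simp at hmem

lemma mem_TK_succ (ha : BBSState n a) (hf : IsDest n a f) {b : ℤ} {c : ℕ} :
    c ∈ TK n a ha f (b + 1) ↔
      ((c ∈ TK n a ha f b ∧ f (posn n a ha c) ≠ b) ∨ (a b = c ∧ c ≤ n)) := by
  constructor
  · intro h
    obtain ⟨⟨h1, h2⟩, hlt, hle⟩ := mem_TK.1 h
    by_cases hpc : posn n a ha c = b
    · right
      rw [← hpc, posn_spec ha h1 h2]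
      exact ⟨rfl, h2⟩
    · left
      exact ⟨mem_TK.2 ⟨⟨h1, h2⟩, by omega, by omega⟩, by omega⟩
  · intro h
    rcases h with ⟨hmem, hne⟩ | ⟨hab, hcn⟩
    · obtain ⟨⟨h1, h2⟩, hlt, hle⟩ := mem_TK.1 hmem
      exact mem_TK.2 ⟨⟨h1, h2⟩, by omega, by omega⟩
    · have h1 : 1 ≤ c := by have := (ha.1 b).1; omega
      have hpc : posn n a ha c = b := by rw [← hab]; exact posn_eq ha (by omega)
      have hfb : b < f b := f_gt hf (by omega)
      refine mem_TK.2 ⟨⟨h1, hcn⟩, by omega, by rw [hpc]; omega⟩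

/-! ### sorted-list surgery on Finsets -/

lemma sort_pieces {s : Finset ℕ} {u v : List ℕ}
    (hs : s.sort (· ≤ ·) = u ++ v) : u.Pairwise (· ≤ ·) ∧ v.Pairwise (· ≤ ·) ∧
      ∀ e ∈ u, ∀ g ∈ v, e ≤ g := by
  have := Finset.pairwise_sort s (· ≤ ·)
  rw [hs, List.pairwise_append] at this
  exact this

lemma sort_insert_erase {s : Finset ℕ} {c₀ x : ℕ} {u v' : List ℕ}
    (hs : s.sort (· ≤ ·) = u ++ c₀ :: v') (hx : x ∉ s)
    (hu : ∀ e ∈ u, e ≤ x) (hxc : x < c₀) (hv : ∀ e ∈ v', x ≤ e) :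
    (insert x (s.erase c₀)).sort (· ≤ ·) = u ++ x :: v' := by
  obtain ⟨hsu, hsv, hcross⟩ := sort_pieces hs
  have hperm : List.Perm ((insert x (s.erase c₀)).sort (· ≤ ·)) (u ++ x :: v') := by
    rw [← Multiset.coe_eq_coe, Finset.sort_eq,
      Finset.insert_val_of_notMem (by simp [hx]), Finset.erase_val]
    have hval : s.1 = ↑(u ++ c₀ :: v') := by rw [← Finset.sort_eq s (· ≤ ·), hs]
    rw [hval, Multiset.coe_erase,
      List.erase_append_right _ (fun hmem => by have := hu _ hmem; omega),
      List.erase_cons_head, Multiset.cons_coe, Multiset.coe_eq_coe]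
    exact List.perm_middle.symm
  refine List.Perm.eq_of_pairwise' (Finset.pairwise_sort _ _) ?_ hperm
  rw [List.pairwise_append]
  refine ⟨hsu, ?_, ?_⟩
  · exact List.pairwise_cons.2 ⟨fun g hg => hv g hg, (List.pairwise_cons.1 hsv).2⟩
  · intro e he g hg
    rcases List.mem_cons.1 hg with rfl | hg
    · exact hu e he
    · exact hcross e he g (by simp [hg])

lemma sort_insert_top {s : Finset ℕ} {x : ℕ} (hx : x ∉ s)
    (hall : ∀ e ∈ s.sort (· ≤ ·), e ≤ x) :
    (insert x s).sort (· ≤ ·) = s.sort (· ≤ ·) ++ [x] := by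
  have hperm : List.Perm ((insert x s).sort (· ≤ ·)) (s.sort (· ≤ ·) ++ [x]) := by
    rw [← Multiset.coe_eq_coe, Finset.sort_eq, Finset.insert_val_of_notMem (by simp [hx])]
    have hval : s.1 = ↑(s.sort (· ≤ ·)) := (Finset.sort_eq _ _).symm
    rw [hval, Multiset.cons_coe, Multiset.coe_eq_coe]
    exact (List.perm_append_singleton _ _).symm
  refine List.Perm.eq_of_pairwise' (Finset.pairwise_sort _ _) ?_ hperm
  rw [List.pairwise_append]
  exact ⟨Finset.pairwise_sort _ _, List.pairwise_singleton _ _,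
    fun e he g hg => by rw [List.mem_singleton.1 hg]; exact hall e he⟩

lemma sort_erase_head {s : Finset ℕ} {c₀ : ℕ} {rest : List ℕ}
    (hs : s.sort (· ≤ ·) = c₀ :: rest) :
    (s.erase c₀).sort (· ≤ ·) = rest := by
  have hperm : List.Perm ((s.erase c₀).sort (· ≤ ·)) rest := by
    rw [← Multiset.coe_eq_coe, Finset.sort_eq, Finset.erase_val]
    have hval : s.1 = ↑(c₀ :: rest) := by rw [← Finset.sort_eq s (· ≤ ·), hs]
    rw [hval, Multiset.coe_erase, List.erase_cons_head]
  refine List.Perm.eq_of_pairwise' (Finset.pairwise_sort _ _) ?_ hperm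
  have := Finset.pairwise_sort s (· ≤ ·)
  rw [hs] at this
  exact (List.pairwise_cons.1 this).2

end BBSLemmas

section CarrierStep

variable {n : ℕ} {a a' : ℤ → ℕ} {f : ℤ → ℤ}

lemma carrier_step (ha : BBSState n a) (hf : IsDest n a f)
    (hev2 : ∀ i, a i ≤ n → a' (f i) = a i)
    (hev3 : ∀ k, (∀ i, a i ≤ n → f i ≠ k) → a' k = n + 1)
    (hn : 1 ≤ n) (b : ℤ) :
    (insertRow (carrier n a ha f b) (a b) = (carrier n a ha f (b + 1), some (a' b))) ∨
    ((insertRow (carrier n a ha f b) (a b)).2 = none ∧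
      carrier n a ha f (b + 1) = (carrier n a ha f b).tail ++ [a b] ∧
      a' b = (carrier n a ha f b).headI) := by
  set s : Finset ℕ := TK n a ha f b with hsdef
  by_cases hx : a b ≤ n
  · -- box `b` contains a ball of color `a b`
    left
    have hx1 : 1 ≤ a b := (ha.1 b).1
    have hxs : a b ∉ s := by
      intro hmem
      have := (mem_TK.1 hmem).2.1
      rw [posn_eq ha hx] at this
      omega
    obtain ⟨u, v, hs, hu, hv, hsu, hsv⟩ := sorted_split (Finset.pairwise_sort s (· ≤ ·)) (a b)
    cases v with
    | cons c₀ v' =>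
        have hc₀ : c₀ ∈ s := by
          rw [← Finset.mem_sort (α := ℕ) (· ≤ ·), hs]; simp
        have hxc : a b < c₀ := hv c₀ (by simp)
        have hmin : ∀ c ∈ s, a b < c → c₀ ≤ c := by
          intro c hc hgt
          have hcs : c ∈ s.sort (· ≤ ·) := (Finset.mem_sort (α := ℕ) (· ≤ ·)).2 hc
          rw [hs] at hcs
          rcases List.mem_append.1 hcs with hcu | hcv
          · have := hu c hcu; omega
          · rcases List.mem_cons.1 hcv with rfl | hcv
            · exact le_refl _
            · exact (List.pairwise_cons.1 hsv).1 c hcv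
        have hland : f (posn n a ha c₀) = b := land_occ ha hf hx hc₀ hxc hmin
        have hc₀n : c₀ ≤ n := TK_le hc₀
        have hc₀1 : 1 ≤ c₀ := (mem_TK.1 hc₀).1.1
        have hpc₀ : a (posn n a ha c₀) = c₀ := posn_spec ha hc₀1 hc₀n
        have hout : a' b = c₀ := by
          rw [← hland, hev2 _ (by omega), hpc₀]
        -- the new transit set
        have hTK1 : TK n a ha f (b + 1) = insert (a b) (s.erase c₀) := by
          ext c
          rw [mem_TK_succ ha hf, Finset.mem_insert, Finset.mem_erase, ← hsdef]
          constructor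
          · rintro (⟨hcs, hfc⟩ | ⟨hab, hcn⟩)
            · refine Or.inr ⟨?_, hcs⟩
              rintro rfl
              exact hfc hland
            · exact Or.inl hab.symm
          · rintro (rfl | ⟨hne, hcs⟩)
            · exact Or.inr ⟨rfl, hx⟩
            · refine Or.inl ⟨hcs, ?_⟩
              intro hfc
              have hcn' : c ≤ n := TK_le hcs
              have hc1' : 1 ≤ c := (mem_TK.1 hcs).1.1
              have hpc : a (posn n a ha c) = c := posn_spec ha hc1' hcn'
              have heq : posn n a ha c = posn n a ha c₀ :=
                f_inj ha hev2 (by omega) (by omega) (by rw [hfc, hland])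
              apply hne
              rw [← hpc, heq, hpc₀]
        have hsort1 : (TK n a ha f (b + 1)).sort (· ≤ ·) = u ++ a b :: v' := by
          rw [hTK1]
          exact sort_insert_erase hs hxs hu hxc
            (fun e he => le_of_lt (hv e (by simp [he])))
        have hcard1 : (TK n a ha f (b + 1)).card = s.card := by
          rw [hTK1, Finset.card_insert_of_notMem (fun hmem => hxs (Finset.mem_of_mem_erase hmem)),
            Finset.card_erase_of_mem hc₀]
          have : 1 ≤ s.card := Finset.card_pos.2 ⟨c₀, hc₀⟩
          omega
        have hcomp : insertRow (carrier n a ha f b) (a b)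
            = (u ++ a b :: (v' ++ List.replicate (n - s.card) (n + 1)), some c₀) := by
          rw [carrier, ← hsdef, hs]
          have := insertRow_mid (u := u) (b := c₀)
            (v := v' ++ List.replicate (n - s.card) (n + 1)) hu hxc
          simpa [List.append_assoc] using this
        rw [hcomp, hout, carrier, hsort1, hcard1]
        simp [List.append_assoc]
    | nil =>
        -- no transit ball bigger than `a b` : the carrier swallows the ball, drops an `e`
        have hall : ∀ c ∈ s, c ≤ a b := by
          intro c hc
          have hcs : c ∈ s.sort (· ≤ ·) := (Finset.mem_sort (α := ℕ) (· ≤ ·)).2 hc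
          rw [hs] at hcs
          exact hu c (by simpa using hcs)
        have hcard : s.card < n := by
          have hsub : insert (a b) s ⊆ Finset.Icc 1 n := by
            intro c hc
            rcases Finset.mem_insert.1 hc with rfl | hc
            · exact Finset.mem_Icc.2 ⟨hx1, hx⟩
            · exact Finset.mem_Icc.2 ⟨(mem_TK.1 hc).1.1, TK_le hc⟩
          have := Finset.card_le_card hsub
          rw [Finset.card_insert_of_notMem hxs] at this
          simpa using this
        have hnoland : ∀ j, a j ≤ n → f j ≠ b := no_land_occ ha hf hx hall
        have hout : a' b = n + 1 := hev3 b hnoland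
        have hTK1 : TK n a ha f (b + 1) = insert (a b) s := by
          ext c
          rw [mem_TK_succ ha hf, Finset.mem_insert, ← hsdef]
          constructor
          · rintro (⟨hcs, _⟩ | ⟨hab, _⟩)
            · exact Or.inr hcs
            · exact Or.inl hab.symm
          · rintro (rfl | hcs)
            · exact Or.inr ⟨rfl, hx⟩
            · refine Or.inl ⟨hcs, ?_⟩
              have hcn' : c ≤ n := TK_le hcs
              have hc1' : 1 ≤ c := (mem_TK.1 hcs).1.1
              exact hnoland _ (by rw [posn_spec ha hc1' hcn']; omega)
        have hsall : ∀ e ∈ s.sort (· ≤ ·), e ≤ a b :=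
          fun e he => hall e ((Finset.mem_sort (α := ℕ) (· ≤ ·)).1 he)
        have hsort1 : (TK n a ha f (b + 1)).sort (· ≤ ·) = s.sort (· ≤ ·) ++ [a b] := by
          rw [hTK1]
          exact sort_insert_top hxs hsall
        have hcard1 : (TK n a ha f (b + 1)).card = s.card + 1 := by
          rw [hTK1, Finset.card_insert_of_notMem hxs]
        have hrep : List.replicate (n - s.card) (n + 1)
            = (n + 1) :: List.replicate (n - s.card - 1) (n + 1) := by
          conv_lhs => rw [show n - s.card = (n - s.card - 1) + 1 from by omega]
          rw [List.replicate_succ]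
        have hcomp : insertRow (carrier n a ha f b) (a b)
            = (s.sort (· ≤ ·) ++ a b :: List.replicate (n - s.card - 1) (n + 1),
               some (n + 1)) := by
          rw [carrier, ← hsdef, hrep]
          exact insertRow_mid hsall (by omega) _
        rw [hcomp, hout]
        have hfix2 : n - (TK n a ha f (b + 1)).card = n - s.card - 1 := by
          rw [hcard1]; omega
        rw [carrier, hsort1, hfix2]
        simp [List.append_assoc]
  · -- box `b` is empty
    right
    have hab : a b = n + 1 := by have := ha.1 b; omega
    have hnone : insertRow (carrier n a ha f b) (a b)
        = (carrier n a ha f b ++ [a b], none) := by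
      apply insertRow_last
      intro e he
      rw [carrier, ← hsdef] at he
      rcases List.mem_append.1 he with he | he
      · have := TK_le ((Finset.mem_sort (α := ℕ) (· ≤ ·)).1 he); omega
      · have := List.eq_of_mem_replicate he; omega
    rcases hsort : s.sort (· ≤ ·) with _ | ⟨c₀, rest⟩
    · -- no transit balls at all
      have hsemp : s = ∅ := by
        have := Finset.length_sort (α := ℕ) (· ≤ ·) (s := s)
        rw [hsort] at this
        exact Finset.card_eq_zero.1 (by simpa using this.symm)
      have hTK1 : TK n a ha f (b + 1) = ∅ := by
        ext c
        rw [mem_TK_succ ha hf, ← hsdef, hsemp]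
        simp only [Finset.notMem_empty, false_and, false_or, iff_false]
        rintro ⟨h1, h2⟩
        omega
      have hcarr : carrier n a ha f b = List.replicate n (n + 1) := by
        rw [carrier, ← hsdef, hsemp]
        simp
      have hrepl : List.replicate n (n + 1) = (n + 1) :: List.replicate (n - 1) (n + 1) := by
        rw [← List.replicate_succ]; congr 1; omega
      refine ⟨by rw [hnone], ?_, ?_⟩
      · rw [carrier, hTK1, hcarr, hab, hrepl]
        simp only [Finset.sort_empty, Finset.card_empty, Nat.sub_zero, List.nil_append,
          List.tail_cons]
        rw [← List.replicate_succ']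
        congr 1
        omega
      · rw [hcarr, hrepl, hev3 b (no_land_emp ha hf (hsdef ▸ hsemp))]
        simp
    · -- the smallest transit ball lands at `b`
      have hc₀ : c₀ ∈ s := by
        rw [← Finset.mem_sort (α := ℕ) (· ≤ ·), hsort]; simp
      have hmin : ∀ c ∈ s, c₀ ≤ c := by
        intro c hc
        have hcs : c ∈ s.sort (· ≤ ·) := (Finset.mem_sort (α := ℕ) (· ≤ ·)).2 hc
        rw [hsort] at hcs
        rcases List.mem_cons.1 hcs with rfl | hcv
        · exact le_refl _
        · have hss := Finset.pairwise_sort s (· ≤ ·)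
          rw [hsort] at hss
          exact (List.pairwise_cons.1 hss).1 c hcv
      have hland : f (posn n a ha c₀) = b := land_emp ha hf hab hc₀ hmin
      have hc₀n : c₀ ≤ n := TK_le hc₀
      have hc₀1 : 1 ≤ c₀ := (mem_TK.1 hc₀).1.1
      have hpc₀ : a (posn n a ha c₀) = c₀ := posn_spec ha hc₀1 hc₀n
      have hTK1 : TK n a ha f (b + 1) = s.erase c₀ := by
        ext c
        rw [mem_TK_succ ha hf, Finset.mem_erase, ← hsdef]
        constructor
        · rintro (⟨hcs, hfc⟩ | ⟨h1, h2⟩)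
          · refine ⟨?_, hcs⟩
            rintro rfl
            exact hfc hland
          · omega
        · rintro ⟨hne, hcs⟩
          refine Or.inl ⟨hcs, ?_⟩
          intro hfc
          have hcn' : c ≤ n := TK_le hcs
          have hc1' : 1 ≤ c := (mem_TK.1 hcs).1.1
          have hpc : a (posn n a ha c) = c := posn_spec ha hc1' hcn'
          have heq : posn n a ha c = posn n a ha c₀ :=
            f_inj ha hev2 (by omega) (by omega) (by rw [hfc, hland])
          apply hne
          rw [← hpc, heq, hpc₀]
      have hsort1 : (TK n a ha f (b + 1)).sort (· ≤ ·) = rest := by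
        rw [hTK1]
        exact sort_erase_head hsort
      have hcards : 1 ≤ s.card := Finset.card_pos.2 ⟨c₀, hc₀⟩
      have hcard1 : (TK n a ha f (b + 1)).card = s.card - 1 := by
        rw [hTK1, Finset.card_erase_of_mem hc₀]
      have hcardn : s.card ≤ n := by rw [hsdef]; exact TK_card_le
      refine ⟨by rw [hnone], ?_, ?_⟩
      · rw [carrier, carrier, ← hsdef, hsort1, hcard1, hsort, hab]
        rw [show n - (s.card - 1) = (n - s.card) + 1 by omega, List.replicate_succ']
        simp [List.append_assoc]
      · have hout : a' b = c₀ := by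
          rw [← hland, hev2 _ (by omega), hpc₀]
        rw [hout, carrier, ← hsdef, hsort]
        simp

end CarrierStep

/-! ### The bi-word as a filtered interval word -/

lemma map_snd_filterMap {b : ℤ → ℕ} {n : ℕ} (p : ℤ) : ∀ l : List ℕ,
    (l.filterMap
        (fun k : ℕ => if b (p + (k : ℤ)) ≤ n then some ((p + (k : ℤ)), b (p + (k : ℤ))) else none)).map
        Prod.snd
      = (l.map (fun k : ℕ => b (p + (k : ℤ)))).filter (· ≤ n) := by
  intro l
  induction l with
  | nil => simp
  | cons k l ih =>
      by_cases h : b (p + (k : ℤ)) ≤ n <;>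
        simp [List.filterMap_cons, List.filter_cons, h, ih]

lemma biword_eq {n : ℕ} {b : ℤ → ℕ} {w : List (ℤ × ℕ)}
    (hw : IsBiword n b w) (p : ℤ) (N : ℕ)
    (hcover : ∀ i, b i ≤ n → ∃ k : ℕ, k < N ∧ i = p + (k : ℤ)) :
    w.map Prod.snd = ((List.range N).map (fun k : ℕ => b (p + (k : ℤ)))).filter (· ≤ n) := by
  set g : ℕ → Option (ℤ × ℕ) :=
    fun k => if b (p + (k : ℤ)) ≤ n then some ((p + (k : ℤ)), b (p + (k : ℤ))) else none with hg
  obtain ⟨hsorted, hmem, hall⟩ := hw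
  have hgsome : ∀ (k : ℕ) (x : ℤ × ℕ), g k = some x → x = ((p + (k : ℤ)), b (p + (k : ℤ))) ∧
      b (p + (k : ℤ)) ≤ n := by
    intro k x hgk
    have hgk' : (if b (p + (k : ℤ)) ≤ n then some ((p + (k : ℤ)), b (p + (k : ℤ))) else none)
        = some x := hgk
    by_cases h : b (p + (k : ℤ)) ≤ n
    · rw [if_pos h] at hgk'
      exact ⟨(Option.some.inj hgk').symm, h⟩
    · rw [if_neg h] at hgk'; cases hgk'
  have hmemW : ∀ x : ℤ × ℕ, x ∈ (List.range N).filterMap g ↔ (b x.1 = x.2 ∧ x.2 ≤ n) := by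
    intro x
    rw [List.mem_filterMap]
    constructor
    · rintro ⟨k, hk, hgk⟩
      obtain ⟨rfl, h⟩ := hgsome k x hgk
      exact ⟨rfl, h⟩
    · rintro ⟨hbx, hxn⟩
      obtain ⟨k, hkN, hik⟩ := hcover x.1 (by omega)
      refine ⟨k, List.mem_range.2 hkN, ?_⟩
      show (if b (p + (k : ℤ)) ≤ n then some ((p + (k : ℤ)), b (p + (k : ℤ))) else none) = some x
      rw [← hik, hbx, if_pos hxn]
  have hmemw : ∀ x : ℤ × ℕ, x ∈ w ↔ (b x.1 = x.2 ∧ x.2 ≤ n) := by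
    intro x
    constructor
    · exact hmem x
    · rintro ⟨hbx, hxn⟩
      have := hall x.1 (by omega)
      rw [hbx] at this
      exact this
  have hndw : w.Nodup := by
    have : (w.map Prod.fst).Nodup := hsorted.nodup
    exact List.Nodup.of_map _ this
  have hpairW : List.Pairwise (fun x y : ℤ × ℕ => x.1 < y.1) ((List.range N).filterMap g) := by
    refine List.Pairwise.filterMap g ?_ ((List.pairwise_lt_range (n := N)))
    intro k k' hkk' x hx y hy
    obtain ⟨rfl, -⟩ := hgsome k x hx
    obtain ⟨rfl, -⟩ := hgsome k' y hy
    simp only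
    omega
  have hndW : ((List.range N).filterMap g).Nodup :=
    hpairW.imp (fun h => by intro he; rw [he] at h; exact lt_irrefl _ h)
  have hperm : w.Perm ((List.range N).filterMap g) :=
    (List.perm_ext_iff_of_nodup hndw hndW).2 (fun x => (hmemw x).trans (hmemW x).symm)
  haveI : IsAntisymm (ℤ × ℕ) (fun x y : ℤ × ℕ => x.1 < y.1) :=
    ⟨fun a b h h' => absurd (lt_trans h h') (lt_irrefl _)⟩
  have hw_sorted : List.Pairwise (fun x y : ℤ × ℕ => x.1 < y.1) w :=
    List.pairwise_map.1 hsorted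
  have heq : w = (List.range N).filterMap g :=
    List.Perm.eq_of_pairwise' hw_sorted hpairW hperm
  rw [heq, hg, map_snd_filterMap]

/-- Conservation of the P-symbol: the insertion tableau of the color word of
a standard box-ball state (colors read in increasing order of box label) is
unchanged by one step of the box-ball time evolution. -/
theorem bbs_P_conserved (n : ℕ) (a a' : ℤ → ℕ)
    (ha : BBSState n a) (ha' : BBSState n a') (hev : EvolveTo n a a')
    (w w' : List (ℤ × ℕ)) (hw : IsBiword n a w) (hw' : IsBiword n a' w') :
    Tab (w.map Prod.snd) = Tab (w'.map Prod.snd) := by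
  rcases Nat.eq_zero_or_pos n with hn0 | hn
  · subst hn0
    have hw0 : w = [] := by
      rw [List.eq_nil_iff_forall_not_mem]
      intro x hx
      have h1 := hw.2.1 x hx
      have h2 := (ha.1 x.1).1
      omega
    have hw0' : w' = [] := by
      rw [List.eq_nil_iff_forall_not_mem]
      intro x hx
      have h1 := hw'.2.1 x hx
      have h2 := (ha'.1 x.1).1
      omega
    rw [hw0, hw0']
  · obtain ⟨f, hf, hev2, hev3⟩ := hev
    -- the interval [p, q] containing all the activity
    have hicc1 : (1 : ℕ) ∈ Finset.Icc 1 n := Finset.mem_Icc.2 ⟨le_refl _, hn⟩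
    set S : Finset ℤ := (Finset.Icc 1 n).image (posn n a ha) with hSdef
    have hSne : S.Nonempty := ⟨posn n a ha 1, Finset.mem_image_of_mem _ hicc1⟩
    set p : ℤ := S.min' hSne with hpdef
    have hQne : (S.image f).Nonempty := hSne.image f
    set q : ℤ := (S.image f).max' hQne with hqdef
    have hball_mem : ∀ i, a i ≤ n → i ∈ S := by
      intro i hi
      exact Finset.mem_image.2 ⟨a i, Finset.mem_Icc.2 ⟨(ha.1 i).1, hi⟩, posn_eq ha hi⟩
    have hple : ∀ i, a i ≤ n → p ≤ i := fun i hi => S.min'_le i (hball_mem i hi)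
    have hfq : ∀ i, a i ≤ n → f i ≤ q := fun i hi =>
      (S.image f).le_max' (f i) (Finset.mem_image_of_mem f (hball_mem i hi))
    have hi1 : a (posn n a ha 1) = 1 := posn_spec ha (le_refl 1) hn
    have hpq : p ≤ q := by
      have h1 : a (posn n a ha 1) ≤ n := by omega
      have := hple _ h1
      have := hfq _ h1
      have := f_gt hf h1
      omega
    set N : ℕ := (q + 1 - p).toNat with hNdef
    have hN : (N : ℤ) = q + 1 - p := Int.toNat_of_nonneg (by omega)
    -- empty transit sets at both ends
    have hTKp : TK n a ha f p = ∅ := by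
      ext c
      simp only [mem_TK, Finset.notMem_empty, iff_false]
      rintro ⟨⟨h1, h2⟩, hlt, hle⟩
      have hc : a (posn n a ha c) = c := posn_spec ha h1 h2
      have := hple (posn n a ha c) (by omega)
      omega
    have hTKend : TK n a ha f (p + N) = ∅ := by
      ext c
      simp only [mem_TK, Finset.notMem_empty, iff_false]
      rintro ⟨⟨h1, h2⟩, hlt, hle⟩
      have hc : a (posn n a ha c) = c := posn_spec ha h1 h2
      have := hfq (posn n a ha c) (by omega)
      omega
    have hcarr_empty : ∀ b : ℤ, TK n a ha f b = ∅ →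
        carrier n a ha f b = List.replicate n (n + 1) := by
      intro b hb
      rw [carrier, hb]
      simp
    -- the carrier chain
    have hchain := K_chain (fun k => carrier n a ha f (p + (k : ℤ)))
      (fun k => a (p + (k : ℤ))) (fun k => a' (p + (k : ℤ)))
      (fun k => carrier_sorted) (fun k => carrier_ne_nil hn)
      (fun k => by
        have h := carrier_step ha hf hev2 hev3 hn (p + (k : ℤ))
        beta_reduce
        rw [show (p + ((k + 1 : ℕ) : ℤ)) = p + (k : ℤ) + 1 from by push_cast; ring]
        exact h) N
    simp only [Nat.cast_zero, add_zero] at hchain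
    rw [hcarr_empty p hTKp, hcarr_empty (p + N) hTKend] at hchain
    have hfil := Keq_filter n hchain
    rw [List.filter_append, List.filter_append] at hfil
    have hrepfil : (List.replicate n (n + 1)).filter (· ≤ n) = [] := by
      rw [List.filter_eq_nil_iff]
      intro c hc
      have := List.eq_of_mem_replicate hc
      simp [this]
    rw [hrepfil, List.nil_append, List.append_nil] at hfil
    -- identify the two filtered words with the color words
    have hcoverA : ∀ i, a i ≤ n → ∃ k : ℕ, k < N ∧ i = p + (k : ℤ) := by
      intro i hi
      refine ⟨(i - p).toNat, ?_, ?_⟩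
      · have h1 := hple i hi
        have h2 := f_gt hf hi
        have h3 := hfq i hi
        omega
      · have h1 := hple i hi
        rw [Int.toNat_of_nonneg (by omega)]
        ring
    have hcoverA' : ∀ i, a' i ≤ n → ∃ k : ℕ, k < N ∧ i = p + (k : ℤ) := by
      intro i hi
      have hland : ∃ j, a j ≤ n ∧ f j = i := by
        by_contra hno
        push_neg at hno
        have : a' i = n + 1 := hev3 i (fun j hj => hno j hj)
        omega
      obtain ⟨j, hj, hfj⟩ := hland
      refine ⟨(i - p).toNat, ?_, ?_⟩
      · have h1 := hple j hj
        have h2 := f_gt hf hj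
        have h3 := hfq j hj
        omega
      · have h1 := hple j hj
        have h2 := f_gt hf hj
        rw [Int.toNat_of_nonneg (by omega)]
        ring
    rw [biword_eq hw p N hcoverA, biword_eq hw' p N hcoverA']
    exact Keq_tab hfil
end
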